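/- arXiv:1909.07010 — 9 statements merged into one kernel-verified Lean document; each statement's English description precedes it below -/
import Mathlib

section
/- Let n ≥ 1 and ℓ ≥ 0 be integers and let ζ = exp(2πi/(n+1)) ∈ ℂ. For every integer k, the number of tuples m ∈ X(n,ℓ) with σ^k·m = m equals the complex number ∑_{m ∈ X(n,ℓ)} ζ^{k·ev(m)}. (This is the cyclic sieving phenomenon for the triple (X(n,ℓ), C_{n+1}, [n+ℓ choose ℓ]_q) arising from level-ℓ dominant weights of type A_n^{(1)}.) -/
/-!
Write `g = gcd(k, n + 1)` and `n + 1 = g * e`. A tuple is fixed by `σ ^ k` iff it is fixed by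
`σ ^ g`, i.e. iff it is `g`-periodic; such a tuple is determined by its first `g` entries, whose
sum is `ℓ / e`, so the fixed tuples are counted by `[e ∣ ℓ]` times the number of `g`-part
compositions of `ℓ / e`.

On the other side `ω = ζ ^ k` is a primitive `e`-th root of unity and the sum is the coefficient
of `t ^ ℓ` in `∏_{i ≤ n} (1 - ω ^ i t)⁻¹`. Since `∏_{r < e} (1 - ω ^ r t) = 1 - t ^ e`, this
product is `(1 - t ^ e) ^ (-g)`, the image of `(1 - t) ^ (-g)` under `t ↦ t ^ e`, whose
coefficients count the same compositions.
-/

open Finset PowerSeries Function Fin.NatCast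

@[to_additive sum_range_mul_eq_nsmul_of_periodic]
theorem prod_range_mul_eq_pow_of_periodic {M : Type*} [CommMonoid M] {f : ℕ → M} {a : ℕ}
    (hf : Periodic f a) (n : ℕ) : ∏ i ∈ range (n * a), f i = (∏ i ∈ range a, f i) ^ n := by
  induction n with
  | zero => simp
  | succ n ih =>
    rw [Nat.succ_mul, prod_range_add, ih, pow_succ]
    congr 1
    exact prod_congr rfl fun i _ => by rw [add_comm]; exact hf.nsmul n i

section Periodic

variable {α : Type*} {N g : ℕ} [NeZero g]

theorem sum_comp_natCast_val {M : Type*} [AddCommMonoid M] {e : ℕ} (hN : N = e * g)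
    (f : Fin g → M) : ∑ i : Fin N, f (i : ℕ) = e • ∑ r, f r := by
  have hf : Periodic (fun j : ℕ => f j) g := fun j => by simp
  rw [Fin.sum_univ_eq_sum_range (fun j => f j), hN, sum_range_mul_eq_nsmul_of_periodic hf,
    ← Fin.sum_univ_eq_sum_range (fun j => f j)]
  simp only [Fin.cast_val_eq_self]

variable [NeZero N]

theorem Function.Periodic.apply_eq_apply_mod {m : Fin N → α} (hm : Periodic m (g : Fin N))
    (i : Fin N) : m i = m (((i : ℕ) : Fin g) : ℕ) := by
  have hm' : Periodic (fun j : ℕ => m j) g := fun j => by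
    simpa using hm (j : Fin N)
  rw [Fin.val_natCast, hm'.map_mod_nat, Fin.cast_val_eq_self]

theorem periodic_comp_natCast_val (hg : g ∣ N) (f : Fin g → α) :
    Periodic (fun i : Fin N => f (i : ℕ)) (g : Fin N) := fun i => by
  simp only [Fin.val_add, Fin.val_natCast]
  congr 1
  ext
  rw [Fin.val_natCast, Fin.val_natCast, Nat.mod_mod_of_dvd _ hg, Nat.add_mod,
    Nat.mod_mod_of_dvd _ hg, Nat.mod_self, add_zero, Nat.mod_mod]

end Periodic

theorem filter_piFinset_sum_eq_piAntidiag {ι : Type*} [Fintype ι] [DecidableEq ι] (ℓ : ℕ) :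
    {m ∈ Fintype.piFinset fun _ : ι => range (ℓ + 1) | ∑ i, m i = ℓ} = piAntidiag univ ℓ := by
  ext m
  simp only [mem_filter, Fintype.mem_piFinset, mem_range, Nat.lt_succ_iff, mem_piAntidiag,
    mem_univ, implies_true, and_true, and_iff_right_iff_imp]
  rintro rfl i
  exact single_le_sum (fun _ _ => Nat.zero_le _) (mem_univ i)

theorem card_filter_periodic_piAntidiag {N e g : ℕ} [NeZero N] [NeZero g] (hN : N = e * g)
    (ℓ : ℕ) [DecidablePred fun m : Fin N → ℕ => Periodic m (g : Fin N)] :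
    #{m ∈ piAntidiag univ ℓ | Periodic m (g : Fin N)} =
      if e ∣ ℓ then #(piAntidiag (univ : Finset (Fin g)) (ℓ / e)) else 0 := by
  have he : 0 < e := Nat.pos_of_ne_zero fun he => NeZero.ne N (by simp [hN, he])
  have hgN : g ≤ N := Nat.le_of_dvd (NeZero.pos N) ⟨e, hN.trans (mul_comm e g)⟩
  have hsum : ∀ m : Fin N → ℕ, Periodic m g → ∑ i, m i = e * ∑ r : Fin g, m (r : ℕ) :=
    fun m hm => by
      rw [sum_congr rfl fun i _ => hm.apply_eq_apply_mod i,
        sum_comp_natCast_val hN (fun r => m r), smul_eq_mul]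
  split_ifs with hℓ
  · obtain ⟨s, rfl⟩ := hℓ
    rw [Nat.mul_div_cancel_left s he]
    refine card_nbij' (fun m r => m (r : ℕ)) (fun f i => f (i : ℕ)) ?_ ?_ ?_ ?_
    · intro m hm
      simp only [mem_coe, mem_filter, mem_piAntidiag, mem_univ, implies_true, and_true] at hm
      simp only [mem_coe, mem_piAntidiag, mem_univ, implies_true, and_true]
      exact Nat.eq_of_mul_eq_mul_left he ((hsum m hm.2).symm.trans hm.1)
    · intro f hf
      simp only [mem_coe, mem_piAntidiag, mem_univ, implies_true, and_true] at hf
      simp only [mem_coe, mem_filter, mem_piAntidiag, mem_univ, implies_true, and_true]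
      exact ⟨by rw [sum_comp_natCast_val hN, hf, smul_eq_mul],
        periodic_comp_natCast_val ⟨e, hN.trans (mul_comm e g)⟩ f⟩
    · intro m hm
      simp only [mem_coe, mem_filter] at hm
      exact funext fun i => (hm.2.apply_eq_apply_mod i).symm
    · intro f _
      funext r
      dsimp only
      rw [Fin.val_natCast, Nat.mod_eq_of_lt (r.isLt.trans_le hgN), Fin.cast_val_eq_self]
  · rw [card_eq_zero, filter_eq_empty_iff]
    intro m hm hper
    exact hℓ ⟨_, (mem_piAntidiag.1 hm).1.symm.trans (hsum m hper)⟩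

namespace PowerSeries

theorem coeff_prod_eq_sum_piAntidiag {R ι : Type*} [CommSemiring R] [Fintype ι] [DecidableEq ι]
    (φ : ι → R⟦X⟧) (s : ℕ) :
    coeff s (∏ i, φ i) = ∑ m ∈ piAntidiag univ s, ∏ i, coeff (m i) (φ i) := by
  rw [coeff_prod, finsuppAntidiag, sum_map]
  exact sum_attach _ (fun m : ι → ℕ => ∏ i, coeff (m i) (φ i))

theorem sum_piAntidiag_prod_pow_eq_coeff {R ι : Type*} [CommSemiring R] [Fintype ι] [DecidableEq ι]
    (a : ι → R) (s : ℕ) :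
    ∑ m ∈ piAntidiag univ s, ∏ i, a i ^ m i = coeff s (∏ i, rescale (a i) (mk 1)) := by
  simp [coeff_prod_eq_sum_piAntidiag, coeff_rescale]

theorem coeff_expand_mk_one_pow {R : Type*} [CommRing R] {e : ℕ} (he : e ≠ 0) (g s : ℕ) :
    coeff s (expand e he ((mk 1 : R⟦X⟧) ^ g)) =
      if e ∣ s then (#(piAntidiag (univ : Finset (Fin g)) (s / e)) : R) else 0 := by
  rw [coeff_expand, ← Fin.prod_const, coeff_prod_eq_sum_piAntidiag]
  simp

theorem prod_one_sub_C_pow_mul_X {R : Type*} [CommRing R] [IsDomain R] {ω : R} {e : ℕ}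
    (hω : IsPrimitiveRoot ω e) (he : 0 < e) :
    ∏ r ∈ range e, (1 - C (ω ^ r) * X : R⟦X⟧) = 1 - X ^ e := by
  have h := X_pow_sub_C_eq_prod (hω.map_of_injective C_injective) he (α := (X : R⟦X⟧)) rfl
  simpa [Polynomial.eval_prod] using (congrArg (Polynomial.eval 1) h).symm

theorem prod_rescale_mk_one_eq_expand {R : Type*} [CommRing R] [IsDomain R] {ω : R}
    {N e g : ℕ} (hω : IsPrimitiveRoot ω e) (he : e ≠ 0) (hN : N = g * e) :
    ∏ i : Fin N, rescale (ω ^ (i : ℕ)) (mk 1 : R⟦X⟧) = expand e he ((mk 1) ^ g) := by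
  have hperiodic : Periodic (fun i : ℕ => (1 - C (ω ^ i) * X : R⟦X⟧)) e := fun i => by
    simp [pow_add, hω.pow_eq_one]
  have hden : ∏ i : Fin N, (1 - C (ω ^ (i : ℕ)) * X : R⟦X⟧) = (1 - X ^ e) ^ g := by
    rw [Fin.prod_univ_eq_prod_range (fun i => 1 - C (ω ^ i) * X), hN,
      prod_range_mul_eq_pow_of_periodic hperiodic,
      prod_one_sub_C_pow_mul_X hω (Nat.pos_of_ne_zero he)]
  refine left_inv_eq_right_inv (a := (1 - X ^ e) ^ g) ?_ ?_
  · rw [← hden, ← prod_mul_distrib]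
    refine prod_eq_one fun i _ => ?_
    rw [← rescale_X, ← map_one (rescale _), ← map_sub, ← map_mul, mk_one_mul_one_sub_eq_one,
      map_one]
  · rw [← expand_X e he, ← map_one (expand e he), ← map_sub, ← map_pow, ← map_mul, ← mul_pow,
      mul_comm, mk_one_mul_one_sub_eq_one, one_pow, map_one]

end PowerSeries

theorem Equiv.arrowCongr_symm_pow_apply {α β : Type*} (σ : Perm α) (j : ℕ) (m : α → β) :
    ((arrowCongr σ (Equiv.refl β)).symm ^ j) m = m ∘ ⇑(σ ^ j) := by
  induction j with
  | zero => rfl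
  | succ j ih => rw [pow_succ', Perm.mul_apply, ih, pow_succ]; rfl

theorem finRotate_pow_apply (n j : ℕ) (i : Fin (n + 1)) : (finRotate (n + 1) ^ j) i = i + j := by
  induction j with
  | zero => simp
  | succ j ih => rw [pow_succ', Equiv.Perm.mul_apply, ih, finRotate_apply, Nat.cast_succ, add_assoc]

theorem zpow_smul_eq_self_iff_pow_gcd {G X : Type*} [Group G] [MulAction G X] {T : G} {N : ℕ}
    (hT : T ^ N = 1) (k : ℤ) (x : X) : T ^ k • x = x ↔ T ^ k.gcd N • x = x := by
  simp only [← MulAction.mem_stabilizer_iff]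
  constructor
  · intro h
    have : T ^ (k.gcd N : ℤ) = (T ^ k) ^ k.gcdA N := by
      rw [Int.gcd_eq_gcd_ab, zpow_add, zpow_mul, zpow_mul, zpow_natCast, hT, one_zpow, mul_one]
    rw [← zpow_natCast, this]
    exact zpow_mem h _
  · intro h
    obtain ⟨q, hq⟩ := Int.gcd_dvd_left k N
    rw [hq, zpow_mul, zpow_natCast]
    exact zpow_mem h _

theorem rotate_zpow_apply_eq_self_iff_periodic (n : ℕ) (k : ℤ) (m : Fin (n + 1) → ℕ) :
    ((Equiv.arrowCongr (finRotate (n + 1)) (Equiv.refl ℕ)).symm ^ k) m = m ↔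
      Periodic m (k.gcd (n + 1 : ℕ) : Fin (n + 1)) := by
  have hT : (Equiv.arrowCongr (finRotate (n + 1)) (Equiv.refl ℕ)).symm ^ (n + 1) = 1 := by
    ext m i
    rw [Equiv.arrowCongr_symm_pow_apply, Function.comp_apply, finRotate_pow_apply,
      Fin.natCast_self, add_zero]
    rfl
  rw [← Equiv.Perm.smul_def, zpow_smul_eq_self_iff_pow_gcd hT, Equiv.Perm.smul_def,
    Equiv.arrowCongr_symm_pow_apply, funext_iff]
  simp [finRotate_pow_apply, Periodic]

theorem IsPrimitiveRoot.zpow_div_gcd {K : Type*} [Field K] {ζ : K} {N : ℕ}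
    (hζ : IsPrimitiveRoot ζ N) (hN : 0 < N) (k : ℤ) : IsPrimitiveRoot (ζ ^ k) (N / k.gcd N) := by
  have hg : 0 < k.gcd N := Int.gcd_pos_of_ne_zero_right _ (by exact_mod_cast hN.ne')
  have hgN : k.gcd N ∣ N := by exact_mod_cast Int.gcd_dvd_right k N
  have := (hζ.pow hN (Nat.mul_div_cancel' hgN).symm).zpow_of_gcd_eq_one (k / k.gcd N) ?_
  · rwa [← zpow_natCast, ← zpow_mul, Int.mul_ediv_cancel' (Int.gcd_dvd_left k N)] at this
  · have := Int.gcd_div_gcd_div_gcd hg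
    rwa [Int.natCast_div]

theorem stmt_0_general (n ℓ : ℕ) (k : ℤ) :
    ((((Fintype.piFinset fun _ : Fin (n + 1) => Finset.range (ℓ + 1)).filter
          (fun m => ∑ i, m i = ℓ)).filter
        (fun m =>
          (((Equiv.arrowCongr (finRotate (n + 1)) (Equiv.refl ℕ)).symm ^ k :
              Equiv.Perm (Fin (n + 1) → ℕ)) m = m))).card : ℂ)
      = ∑ m ∈ (Fintype.piFinset fun _ : Fin (n + 1) => Finset.range (ℓ + 1)).filter
            (fun m => ∑ i, m i = ℓ),
          Complex.exp (2 * Real.pi * Complex.I / (n + 1)) ^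
            (k * ((∑ i : Fin (n + 1), (i : ℕ) * m i : ℕ) : ℤ)) := by
  classical
  set ζ := Complex.exp (2 * Real.pi * Complex.I / (n + 1))
  set g := k.gcd (n + 1 : ℕ)
  set e := (n + 1) / g
  have hζ : IsPrimitiveRoot ζ (n + 1) := by
    simpa using Complex.isPrimitiveRoot_exp (n + 1) n.succ_ne_zero
  have hω : IsPrimitiveRoot (ζ ^ k) e := hζ.zpow_div_gcd n.succ_pos k
  have : NeZero g := ⟨Int.gcd_ne_zero_right (by omega)⟩
  have hN : n + 1 = g * e :=
    (Nat.mul_div_cancel' (Int.natCast_dvd_natCast.mp (Int.gcd_dvd_right k _))).symm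
  have he : e ≠ 0 := by rintro h; simp [h] at hN
  have hsummand (m : Fin (n + 1) → ℕ) :
      ζ ^ (k * ((∑ i : Fin (n + 1), (i : ℕ) * m i : ℕ) : ℤ)) =
        ∏ i : Fin (n + 1), ((ζ ^ k) ^ (i : ℕ)) ^ m i := by
    simp only [zpow_mul, zpow_natCast, ← pow_mul, prod_pow_eq_pow_sum]
  rw [filter_piFinset_sum_eq_piAntidiag,
    filter_congr fun m _ => rotate_zpow_apply_eq_self_iff_periodic n k m,
    card_filter_periodic_piAntidiag (hN.trans (mul_comm g e)),
    sum_congr rfl fun m _ => hsummand m,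
    PowerSeries.sum_piAntidiag_prod_pow_eq_coeff,
    PowerSeries.prod_rescale_mk_one_eq_expand hω he hN, PowerSeries.coeff_expand_mk_one_pow,
    Nat.cast_ite, Nat.cast_zero]

/-- **Cyclic sieving phenomenon for type `A_n^(1)`.**
For `n ≥ 1`, `ℓ ≥ 0` and `ζ = exp(2πi/(n+1))`, for every integer `k`, the number of
`(n+1)`-tuples `m` of nonnegative integers with `∑ m_i = ℓ` fixed by the `k`-th power of the
cyclic shift `(σ·m)_i = m_{i+1 mod (n+1)}` equals `∑_m ζ^(k·ev(m))`, where
`ev(m) = ∑ i·m_i`. -/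
theorem stmt_0 (n ℓ : ℕ) (hn : 1 ≤ n) (k : ℤ) :
    ((((Fintype.piFinset fun _ : Fin (n + 1) => Finset.range (ℓ + 1)).filter
          (fun m => ∑ i, m i = ℓ)).filter
        (fun m =>
          (((Equiv.arrowCongr (finRotate (n + 1)) (Equiv.refl ℕ)).symm ^ k :
              Equiv.Perm (Fin (n + 1) → ℕ)) m = m))).card : ℂ)
      = ∑ m ∈ (Fintype.piFinset fun _ : Fin (n + 1) => Finset.range (ℓ + 1)).filter
            (fun m => ∑ i, m i = ℓ),
          Complex.exp (2 * Real.pi * Complex.I / (n + 1)) ^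
            (k * ((∑ i : Fin (n + 1), (i : ℕ) * m i : ℕ) : ℤ)) :=
  stmt_0_general n ℓ k
end

section
/- Let n ≥ 3 and ℓ ≥ 0 be integers. Then the number of tuples m ∈ X_B(n,ℓ) with m_0 = m_n equals ∑_{m ∈ X_B(n,ℓ)} (−1)^{m_n}. (This is the nontrivial instance of the cyclic sieving phenomenon for the triple (X_B(n,ℓ), C_2, ∑_m q^{m_n}) of type B_n^{(1)}.) -/
open Finset

/-- Double update of a tuple at positions `0` and `Fin.last n`. -/
private def D {n : ℕ} (m : Fin (n + 1) → ℕ) (a b : ℕ) : Fin (n + 1) → ℕ :=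
  Function.update (Function.update m 0 a) (Fin.last n) b

private lemma D_apply {n : ℕ} (m : Fin (n + 1) → ℕ) (a b : ℕ) (i : Fin (n + 1)) :
    D m a b i = if i = Fin.last n then b else if i = 0 then a else m i := by
  simp [D, Function.update_apply]

private lemma D_last {n : ℕ} (m : Fin (n + 1) → ℕ) (a b : ℕ) :
    D m a b (Fin.last n) = b := by simp [D_apply]

private lemma D_zero {n : ℕ} (h0n : (0 : Fin (n + 1)) ≠ Fin.last n)
    (m : Fin (n + 1) → ℕ) (a b : ℕ) : D m a b 0 = a := by
  simp [D_apply, h0n]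

private lemma D_D {n : ℕ} (m : Fin (n + 1) → ℕ) (a b a' b' : ℕ) :
    D (D m a b) a' b' = D m a' b' := by
  funext i
  simp only [D_apply]
  split_ifs <;> rfl

private lemma D_self {n : ℕ} (m : Fin (n + 1) → ℕ) :
    D m (m 0) (m (Fin.last n)) = m := by
  simp [D, Function.update_eq_self]

private lemma upd_mul {n : ℕ} (ν m : Fin (n + 1) → ℕ) (j : Fin (n + 1)) (a : ℕ) :
    (fun i => ν i * Function.update m j a i)
      = Function.update (fun i => ν i * m i) j (ν j * a) := by
  funext i
  by_cases h : i = j <;> simp [Function.update_apply, h]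

private lemma sum_D {n : ℕ} (ν m : Fin (n + 1) → ℕ)
    (h0n : (0 : Fin (n + 1)) ≠ Fin.last n)
    (hν0 : ν 0 = 1) (hνn : ν (Fin.last n) = 1) (a b : ℕ) :
    ∑ i, ν i * D m a b i
      = b + (a + ∑ i ∈ (univ \ {Fin.last n}) \ {0}, ν i * m i) := by
  unfold D
  rw [upd_mul, upd_mul, Finset.sum_update_of_mem (Finset.mem_univ _)]
  rw [Finset.sum_update_of_mem (by simp [h0n])]
  rw [hν0, hνn, one_mul, one_mul]

private lemma sum_self {n : ℕ} (ν m : Fin (n + 1) → ℕ)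
    (h0n : (0 : Fin (n + 1)) ≠ Fin.last n)
    (hν0 : ν 0 = 1) (hνn : ν (Fin.last n) = 1) :
    ∑ i, ν i * m i
      = m (Fin.last n) + (m 0 + ∑ i ∈ (univ \ {Fin.last n}) \ {0}, ν i * m i) := by
  have := sum_D ν m h0n hν0 hνn (m 0) (m (Fin.last n))
  rwa [D_self] at this

/-- **Cyclic sieving phenomenon for type `B_n^(1)`.**
For `n ≥ 3` and `ℓ ≥ 0`, among the `(n+1)`-tuples `m` of nonnegative integers with
`m_0 + m_1 + 2(m_2 + ⋯ + m_{n-1}) + m_n = ℓ`, the number of those with `m_0 = m_n`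
equals `∑_m (-1)^(m_n)`. -/
theorem stmt_1 (n ℓ : ℕ) (hn : 3 ≤ n) :
    let ν : Fin (n + 1) → ℕ := fun i =>
      if (i : ℕ) = 0 ∨ (i : ℕ) = 1 ∨ (i : ℕ) = n then 1 else 2
    let X : Finset (Fin (n + 1) → ℕ) :=
      (Fintype.piFinset fun _ => Finset.range (ℓ + 1)).filter
        (fun m => ∑ i, ν i * m i = ℓ)
    ((X.filter (fun m => m 0 = m (Fin.last n))).card : ℤ)
      = ∑ m ∈ X, (-1 : ℤ) ^ (m (Fin.last n)) := by
  intro ν X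
  have h0n : (0 : Fin (n + 1)) ≠ Fin.last n := by
    intro h
    have h2 : ((0 : Fin (n + 1)) : ℕ) = n := by rw [h]; simp
    simp at h2
    omega
  have hν0 : ν 0 = 1 := by simp [ν]
  have hνn : ν (Fin.last n) = 1 := by simp [ν]
  have hνpos : ∀ i, 1 ≤ ν i := by
    intro i
    simp only [ν]
    split <;> norm_num
  have memX : ∀ m : Fin (n + 1) → ℕ, (∑ i, ν i * m i = ℓ) → m ∈ X := by
    intro m hm
    refine Finset.mem_filter.mpr ⟨Fintype.mem_piFinset.mpr fun i => ?_, hm⟩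
    rw [Finset.mem_range]
    have h1 : ν i * m i ≤ ℓ := hm ▸
      Finset.single_le_sum (f := fun j => ν j * m j) (fun j _ => Nat.zero_le _)
        (Finset.mem_univ i)
    have h2 : m i ≤ ν i * m i := Nat.le_mul_of_pos_left _ (hνpos i)
    omega
  have memX' : ∀ m ∈ X, ∑ i, ν i * m i = ℓ := fun m hm => (Finset.mem_filter.mp hm).2
  have memD : ∀ m ∈ X, ∀ a b : ℕ, a + b = m 0 + m (Fin.last n) → D m a b ∈ X := by
    intro m hm a b hab
    apply memX
    rw [sum_D ν m h0n hν0 hνn]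
    have h1 := memX' m hm
    rw [sum_self ν m h0n hν0 hνn] at h1
    omega
  -- split the right-hand side at the predicate `m 0 = 0 ∧ Even (m (Fin.last n))`
  rw [← Finset.sum_filter_add_sum_filter_not X
      (fun m => m 0 = 0 ∧ Even (m (Fin.last n))) (fun m => (-1 : ℤ) ^ (m (Fin.last n)))]
  -- the sum over the complement vanishes via a sign-reversing involution
  have hinv : ∑ m ∈ X.filter (fun m => ¬(m 0 = 0 ∧ Even (m (Fin.last n)))),
      (-1 : ℤ) ^ (m (Fin.last n)) = 0 := by
    refine Finset.sum_involution
      (fun m _ => if Even (m (Fin.last n)) then D m (m 0 - 1) (m (Fin.last n) + 1)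
        else D m (m 0 + 1) (m (Fin.last n) - 1)) ?_ ?_ ?_ ?_
    · -- signs cancel
      intro m hm
      beta_reduce
      by_cases h : Even (m (Fin.last n))
      · rw [if_pos h, D_last, pow_succ]
        ring
      · have hpos : 1 ≤ m (Fin.last n) := by
          rcases Nat.eq_zero_or_pos (m (Fin.last n)) with h0 | h1
          · exact absurd (h0 ▸ Even.zero) h
          · exact h1
        rw [if_neg h, D_last]
        obtain ⟨k, hk⟩ : ∃ k, m (Fin.last n) = k + 1 := ⟨m (Fin.last n) - 1, by omega⟩
        rw [hk, Nat.add_sub_cancel, pow_succ]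
        ring
    · -- never the identity
      intro m hm _
      beta_reduce
      by_cases h : Even (m (Fin.last n))
      · rw [if_pos h]
        intro hEq
        have := congrFun hEq (Fin.last n)
        rw [D_last] at this
        omega
      · rw [if_neg h]
        intro hEq
        have := congrFun hEq 0
        rw [D_zero h0n] at this
        omega
    · -- stays in the set
      intro m hm
      beta_reduce
      rw [Finset.mem_filter] at hm
      obtain ⟨hmX, hmP⟩ := hm
      by_cases h : Even (m (Fin.last n))
      · have hm0 : 1 ≤ m 0 := by
          rcases Nat.eq_zero_or_pos (m 0) with h0 | h1
          · exact absurd ⟨h0, h⟩ hmP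
          · exact h1
        rw [if_pos h]
        refine Finset.mem_filter.mpr ⟨memD m hmX _ _ (by omega), ?_⟩
        rw [D_last]
        rintro ⟨-, hev⟩
        exact (Nat.even_add_one.mp hev) h
      · have hmn : 1 ≤ m (Fin.last n) := by
          rcases Nat.eq_zero_or_pos (m (Fin.last n)) with h0 | h1
          · exact absurd (h0 ▸ Even.zero) h
          · exact h1
        rw [if_neg h]
        refine Finset.mem_filter.mpr ⟨memD m hmX _ _ (by omega), ?_⟩
        rw [D_zero h0n]
        rintro ⟨h0, -⟩
        omega
    · -- involution
      intro m hm
      beta_reduce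
      rw [Finset.mem_filter] at hm
      obtain ⟨hmX, hmP⟩ := hm
      by_cases h : Even (m (Fin.last n))
      · have hm0 : 1 ≤ m 0 := by
          rcases Nat.eq_zero_or_pos (m 0) with h0 | h1
          · exact absurd ⟨h0, h⟩ hmP
          · exact h1
        have hnotEv : ¬ Even (m (Fin.last n) + 1) := by
          rw [Nat.even_add_one]
          exact not_not_intro h
        rw [if_pos h]
        simp only [D_last, D_zero h0n]
        rw [if_neg hnotEv, D_D]
        rw [show m 0 - 1 + 1 = m 0 by omega,
          show m (Fin.last n) + 1 - 1 = m (Fin.last n) by omega, D_self]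
      · have hmn : 1 ≤ m (Fin.last n) := by
          rcases Nat.eq_zero_or_pos (m (Fin.last n)) with h0 | h1
          · exact absurd (h0 ▸ Even.zero) h
          · exact h1
        have hEv : Even (m (Fin.last n) - 1) := by
          rcases Nat.even_or_odd (m (Fin.last n)) with he | ho
          · exact absurd he h
          · obtain ⟨k, hk⟩ := ho
            exact ⟨k, by omega⟩
        rw [if_neg h]
        simp only [D_last, D_zero h0n]
        rw [if_pos hEv, D_D]
        rw [show m 0 + 1 - 1 = m 0 by omega,
          show m (Fin.last n) - 1 + 1 = m (Fin.last n) by omega, D_self]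
  rw [hinv, add_zero]
  -- the remaining sum equals the cardinality of the fixed set
  have hsumF : ∑ m ∈ X.filter (fun m => m 0 = 0 ∧ Even (m (Fin.last n))),
      (-1 : ℤ) ^ (m (Fin.last n))
      = ((X.filter (fun m => m 0 = 0 ∧ Even (m (Fin.last n)))).card : ℤ) := by
    rw [Finset.sum_congr rfl (fun m hm => ?_), Finset.sum_const, nsmul_eq_mul, mul_one]
    exact (Finset.mem_filter.mp hm).2.2.neg_one_pow
  rw [hsumF]
  clear hsumF hinv
  congr 1
  -- bijection between `{m 0 = m (Fin.last n)}` and `{m 0 = 0 ∧ Even (m (Fin.last n))}`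
  refine Finset.card_bij'
    (fun m _ => D m 0 (2 * m (Fin.last n)))
    (fun m _ => D m (m (Fin.last n) / 2) (m (Fin.last n) / 2)) ?_ ?_ ?_ ?_
  · intro m hm
    rw [Finset.mem_filter] at hm
    show _ ∈ _
    obtain ⟨hmX, heq⟩ := hm
    have hb : (0 : ℕ) + 2 * m (Fin.last n) = m 0 + m (Fin.last n) := by omega
    refine Finset.mem_filter.mpr ⟨memD m hmX 0 (2 * m (Fin.last n)) hb, ?_⟩
    refine ⟨D_zero h0n m _ _, ?_⟩
    show Even (D m 0 (2 * m (Fin.last n)) (Fin.last n))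
    rw [D_last]
    exact ⟨m (Fin.last n), by ring⟩
  · intro m hm
    rw [Finset.mem_filter] at hm
    show _ ∈ _
    obtain ⟨hmX, h0, hev⟩ := hm
    obtain ⟨k, hk⟩ := hev
    have hb : m (Fin.last n) / 2 + m (Fin.last n) / 2 = m 0 + m (Fin.last n) := by omega
    refine Finset.mem_filter.mpr ⟨memD m hmX _ _ hb, ?_⟩
    show D m (m (Fin.last n) / 2) (m (Fin.last n) / 2) 0
      = D m (m (Fin.last n) / 2) (m (Fin.last n) / 2) (Fin.last n)
    rw [D_zero h0n, D_last]
  · intro m hm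
    rw [Finset.mem_filter] at hm
    obtain ⟨hmX, heq⟩ := hm
    simp only [D_D, D_last]
    have he : 2 * m (Fin.last n) / 2 = m (Fin.last n) := by omega
    rw [he]
    have h2 : D m (m (Fin.last n)) (m (Fin.last n))
        = D m (m 0) (m (Fin.last n)) := by rw [heq]
    rw [h2, D_self]
  · intro m hm
    rw [Finset.mem_filter] at hm
    obtain ⟨hmX, h0, hev⟩ := hm
    obtain ⟨k, hk⟩ := hev
    simp only [D_D, D_last]
    have he : 2 * (m (Fin.last n) / 2) = m (Fin.last n) := by omega
    rw [he]
    have h2 : D m 0 (m (Fin.last n)) = D m (m 0) (m (Fin.last n)) := by rw [h0]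
    rw [h2, D_self]
end

section
/- Let n ≥ 2 and ℓ ≥ 0 be integers. Then the number of (n+1)-tuples m = (m_0,…,m_n) of nonnegative integers with m_0 + ⋯ + m_n = ℓ and m_{2j} = m_{2j+1} for every j ≥ 0 with 2j+1 ≤ n equals ∑ (−1)^{m_1 + m_3 + m_5 + ⋯}, where the sum runs over all (n+1)-tuples m of nonnegative integers with m_0 + ⋯ + m_n = ℓ and the exponent is the sum of the entries m_i with i odd. (This is the cyclic sieving phenomenon of type C_n^{(1)}.) -/
/-!
Cut a tuple into the consecutive pairs `(m_{2j}, m_{2j+1})` and, when the length is odd, one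
last entry. Both sides then become the same convolution over the pair sums: a pair with sum `s`
contributes `#{a + b = s | a = b}` to the count and `∑_{a + b = s} (-1)^b` to the signed sum, and
both equal `1` if `s` is even and `0` otherwise. Induction on the length, two entries at a time.
-/

open Finset

namespace Finset.Nat

theorem sum_antidiagonalTuple_add_two {M : Type*} [AddCommMonoid M] (k ℓ : ℕ)
    (f : (Fin (k + 2) → ℕ) → M) :
    ∑ m ∈ antidiagonalTuple (k + 2) ℓ, f m =
      ∑ p ∈ antidiagonal ℓ, ∑ q ∈ antidiagonal p.1, ∑ t ∈ antidiagonalTuple k p.2,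
        f (Fin.cons q.1 (Fin.cons q.2 t)) := by
  simp_rw [← sum_product' (antidiagonal _), sum_sigma']
  refine sum_nbij' (fun m ↦ ⟨(m 0 + Fin.tail m 0, ∑ i, Fin.tail (Fin.tail m) i),
      (m 0, Fin.tail m 0), Fin.tail (Fin.tail m)⟩)
    (fun x ↦ Fin.cons x.2.1.1 (Fin.cons x.2.1.2 x.2.2)) ?_ ?_ ?_ ?_ ?_
  · intro m hm
    simp only [mem_sigma, HasAntidiagonal.mem_antidiagonal, mem_product,
      mem_antidiagonalTuple, Fin.sum_univ_succ] at hm ⊢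
    exact ⟨by rw [← hm, add_assoc]; rfl, trivial, trivial⟩
  · rintro ⟨⟨s, r⟩, ⟨a, b⟩, t⟩ h
    simp only [mem_sigma, HasAntidiagonal.mem_antidiagonal, mem_product,
      mem_antidiagonalTuple] at h ⊢
    rw [Fin.sum_cons, Fin.sum_cons, h.2.2, ← add_assoc, h.2.1, h.1]
  · intro m _
    simp only [Fin.cons_self_tail]
  · rintro ⟨⟨s, r⟩, ⟨a, b⟩, t⟩ h
    simp only [mem_sigma, HasAntidiagonal.mem_antidiagonal, mem_product,
      mem_antidiagonalTuple] at h
    obtain ⟨rfl, rfl, rfl⟩ := h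
    simp
  · intro m _
    simp only [Fin.cons_self_tail]

theorem sum_antidiagonalTuple_add_two_of_eq_mul {R : Type*} [NonUnitalNonAssocSemiring R]
    (k ℓ : ℕ) (f : (Fin (k + 2) → ℕ) → R) (g : ℕ → ℕ → R) (h : (Fin k → ℕ) → R)
    (hf : ∀ a b t, f (Fin.cons a (Fin.cons b t)) = g a b * h t) :
    ∑ m ∈ antidiagonalTuple (k + 2) ℓ, f m =
      ∑ p ∈ antidiagonal ℓ,
        (∑ q ∈ antidiagonal p.1, g q.1 q.2) * ∑ t ∈ antidiagonalTuple k p.2, h t := by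
  simp only [sum_antidiagonalTuple_add_two, hf, sum_mul_sum]

theorem card_antidiagonal_filter_fst_eq_snd (s : ℕ) :
    #{q ∈ antidiagonal s | q.1 = q.2} = if Even s then 1 else 0 := by
  split_ifs with hs
  · obtain ⟨r, rfl⟩ := hs
    rw [card_eq_one]
    refine ⟨(r, r), ?_⟩
    ext ⟨a, b⟩
    simp only [mem_filter, HasAntidiagonal.mem_antidiagonal, mem_singleton, Prod.mk.injEq]
    omega
  · rw [card_eq_zero, filter_eq_empty_iff]
    rintro ⟨a, b⟩ hab (rfl : a = b)
    exact hs ⟨a, (HasAntidiagonal.mem_antidiagonal.1 hab).symm⟩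

theorem sum_antidiagonal_neg_one_pow_snd (s : ℕ) :
    ∑ q ∈ antidiagonal s, (-1 : ℤ) ^ q.2 = if Even s then 1 else 0 := by
  rw [← sum_antidiagonal_swap]
  simp only [Prod.snd_swap]
  rw [sum_antidiagonal_eq_sum_range_succ (fun i _ ↦ (-1 : ℤ) ^ i), neg_one_geom_sum]
  by_cases hs : Even s <;> simp [Nat.even_add_one, hs]

theorem filter_piFinset_range_sum_eq_antidiagonalTuple (k ℓ : ℕ) :
    {m ∈ Fintype.piFinset fun _ : Fin k ↦ range (ℓ + 1) | ∑ i, m i = ℓ} =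
      antidiagonalTuple k ℓ := by
  ext m
  simp only [mem_filter, Fintype.mem_piFinset, mem_range, mem_antidiagonalTuple,
    and_iff_right_iff_imp]
  rintro rfl i
  exact Nat.lt_succ_of_le (single_le_sum (fun _ _ ↦ Nat.zero_le _) (mem_univ i))

end Finset.Nat

def IsPairSymmetric {k : ℕ} (m : Fin k → ℕ) : Prop :=
  ∀ j : Fin k, ∀ h : 2 * (j : ℕ) + 1 < k, m ⟨2 * j, by omega⟩ = m ⟨2 * j + 1, h⟩

instance {k : ℕ} : DecidablePred (IsPairSymmetric (k := k)) :=
  fun _ ↦ inferInstanceAs (Decidable (∀ _, _))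

def oddIndexSum {k : ℕ} (m : Fin k → ℕ) : ℕ :=
  ∑ i ∈ univ.filter (fun i : Fin k ↦ (i : ℕ) % 2 = 1), m i

theorem isPairSymmetric_cons_cons {k : ℕ} (a b : ℕ) (t : Fin k → ℕ) :
    IsPairSymmetric (Fin.cons a (Fin.cons b t) : Fin (k + 2) → ℕ) ↔
      a = b ∧ IsPairSymmetric t := by
  constructor
  · intro h
    exact ⟨by simpa using h 0 (by simp), fun j hj ↦ h ⟨j + 1, by omega⟩ (by simp; omega)⟩
  · rintro ⟨rfl, h⟩ ⟨_ | j, hjk⟩ hj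
    · rfl
    · simp only at hj
      exact h ⟨j, by omega⟩ (by simp only; omega)

theorem oddIndexSum_cons_cons {k : ℕ} (a b : ℕ) (t : Fin k → ℕ) :
    oddIndexSum (Fin.cons a (Fin.cons b t) : Fin (k + 2) → ℕ) = b + oddIndexSum t := by
  simp only [oddIndexSum, sum_filter, Fin.sum_univ_succ, Fin.cons_zero, Fin.cons_succ,
    Fin.val_zero, Fin.val_succ]
  simp [add_assoc]

theorem card_filter_isPairSymmetric_eq_sum_neg_one_pow_oddIndexSum (k ℓ : ℕ) :
    (#{m ∈ Nat.antidiagonalTuple k ℓ | IsPairSymmetric m} : ℤ) =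
      ∑ m ∈ Nat.antidiagonalTuple k ℓ, (-1 : ℤ) ^ oddIndexSum m := by
  induction k using Nat.twoStepInduction generalizing ℓ with
  | zero => rcases ℓ with _ | ℓ <;> simp [IsPairSymmetric, oddIndexSum]
  | one =>
    have hsym : IsPairSymmetric ![ℓ] := fun j hj ↦ absurd hj (by omega)
    simp [filter_singleton, hsym, oddIndexSum]
  | more k ih _ =>
    rw [natCast_card_filter,
      Nat.sum_antidiagonalTuple_add_two_of_eq_mul (g := fun a b ↦ if a = b then 1 else 0)
        (h := fun t ↦ if IsPairSymmetric t then 1 else 0),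
      Nat.sum_antidiagonalTuple_add_two_of_eq_mul (g := fun _ b ↦ (-1) ^ b)
        (h := fun t ↦ (-1) ^ oddIndexSum t)]
    · refine sum_congr rfl fun p _ ↦ ?_
      rw [← natCast_card_filter, ← natCast_card_filter, ih,
        Nat.card_antidiagonal_filter_fst_eq_snd, Nat.sum_antidiagonal_neg_one_pow_snd]
      norm_cast
    · intro a b t
      rw [oddIndexSum_cons_cons, pow_add]
    · intro a b t
      simp only [isPairSymmetric_cons_cons, ite_and, boole_mul]

/-- **Cyclic sieving phenomenon for type `C_n^(1)`.**
For `n ≥ 2` and `ℓ ≥ 0`, among the `(n+1)`-tuples `m` of nonnegative integers with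
`m_0 + ⋯ + m_n = ℓ`, the number of those with `m_{2j} = m_{2j+1}` whenever `2j+1 ≤ n`
equals `∑_m (-1)^(m_1 + m_3 + m_5 + ⋯)`. -/
theorem stmt_2 (n ℓ : ℕ) :
    let X : Finset (Fin (n + 1) → ℕ) :=
      (Fintype.piFinset fun _ => Finset.range (ℓ + 1)).filter (fun m => ∑ i, m i = ℓ)
    ((X.filter (fun m => ∀ j : Fin (n + 1), ∀ h : 2 * (j : ℕ) + 1 ≤ n,
        m ⟨2 * (j : ℕ), by omega⟩ = m ⟨2 * (j : ℕ) + 1, by omega⟩)).card : ℤ)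
      = ∑ m ∈ X,
          (-1 : ℤ) ^ (∑ i ∈ Finset.univ.filter (fun i : Fin (n + 1) => (i : ℕ) % 2 = 1), m i) := by
  intro X
  rw [show X = _ from Nat.filter_piFinset_range_sum_eq_antidiagonalTuple (n + 1) ℓ]
  convert card_filter_isPairSymmetric_eq_sum_neg_one_pow_oddIndexSum (n + 1) ℓ using 4 with m
  · exact forall_congr' fun j ↦ ⟨fun H h ↦ H (by omega), fun H h ↦ H (by omega)⟩
  · rfl
end

section
/- Let n ≥ 2 and ℓ ≥ 0 be integers. Then the number of tuples m ∈ X_{D^{(2)}}(n,ℓ) with m_0 = m_n equals ∑_{m ∈ X_{D^{(2)}}(n,ℓ)} (−1)^{m_n}. (This is the cyclic sieving phenomenon of type D_{n+1}^{(2)}.) -/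
open Finset

/-- **Cyclic sieving phenomenon for type `D_{n+1}^(2)`.**
For `n ≥ 2` and `ℓ ≥ 0`, among the `(n+1)`-tuples `m` of nonnegative integers with
`m_0 + 2(m_1 + ⋯ + m_{n-1}) + m_n = ℓ`, the number of those with `m_0 = m_n`
equals `∑_m (-1)^(m_n)`. -/
theorem stmt_4 (n ℓ : ℕ) (hn : 2 ≤ n) :
    let ν : Fin (n + 1) → ℕ := fun i => if (i : ℕ) = 0 ∨ (i : ℕ) = n then 1 else 2
    let X : Finset (Fin (n + 1) → ℕ) :=
      (Fintype.piFinset fun _ => Finset.range (ℓ + 1)).filter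
        (fun m => ∑ i, ν i * m i = ℓ)
    ((X.filter (fun m => m 0 = m (Fin.last n))).card : ℤ)
      = ∑ m ∈ X, (-1 : ℤ) ^ (m (Fin.last n)) := by
  intro ν X
  set L : Fin (n + 1) := Fin.last n with hLdef
  have hL0 : (L : ℕ) = n := rfl
  have h0L : (0 : Fin (n + 1)) ≠ L := by
    intro h
    have h2 : (0 : ℕ) = n := congrArg Fin.val h
    omega
  have hν0 : ν 0 = 1 := by simp [ν]
  have hνL : ν L = 1 := by simp [ν, hL0]
  have hνpos : ∀ i, 1 ≤ ν i := by
    intro i; simp only [ν]; split <;> omega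
  -- membership in X is just the sum condition
  have hmem : ∀ m : Fin (n + 1) → ℕ, m ∈ X ↔ ∑ i, ν i * m i = ℓ := by
    intro m
    simp only [X, Finset.mem_filter, Fintype.mem_piFinset, Finset.mem_range]
    constructor
    · rintro ⟨-, h⟩; exact h
    · intro h
      refine ⟨fun i => ?_, h⟩
      have h1 : ν i * m i ≤ ∑ j, ν j * m j :=
        Finset.single_le_sum (f := fun j => ν j * m j)
          (fun j _ => Nat.zero_le _) (Finset.mem_univ i)
      rw [h] at h1
      have h2 := hνpos i
      have h3 : m i ≤ ν i * m i := Nat.le_mul_of_pos_left _ h2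
      omega
  -- key: sum after updating coordinates 0 and L
  have key : ∀ (m : Fin (n + 1) → ℕ) (a b : ℕ),
      ∑ i, ν i * (Function.update (Function.update m 0 a) L b) i
        = a + b + ∑ i ∈ (Finset.univ.erase L).erase 0, ν i * m i := by
    intro m a b
    rw [← Finset.add_sum_erase _ _ (Finset.mem_univ L),
      ← Finset.add_sum_erase _ _ (Finset.mem_erase.2 ⟨h0L, Finset.mem_univ 0⟩)]
    have e1 : Function.update (Function.update m 0 a) L b L = b :=
      Function.update_self ..
    have e2 : Function.update (Function.update m 0 a) L b 0 = a := by
      rw [Function.update_of_ne h0L, Function.update_self]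
    have e3 : ∑ i ∈ (Finset.univ.erase L).erase 0,
        ν i * (Function.update (Function.update m 0 a) L b) i
        = ∑ i ∈ (Finset.univ.erase L).erase 0, ν i * m i := by
      refine Finset.sum_congr rfl fun i hi => ?_
      have hi0 : i ≠ 0 := (Finset.mem_erase.1 hi).1
      have hiL : i ≠ L := (Finset.mem_erase.1 (Finset.mem_erase.1 hi).2).1
      rw [Function.update_of_ne hiL, Function.update_of_ne hi0]
    rw [e1, e2, e3, hν0, hνL]
    ring
  have keym : ∀ m : Fin (n + 1) → ℕ,
      ∑ i, ν i * m i = m 0 + m L + ∑ i ∈ (Finset.univ.erase L).erase 0, ν i * m i := by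
    intro m
    have h := key m (m 0) (m L)
    simpa [Function.update_eq_self] using h
  -- Step 1: bijection between {m0 = mL} and {m0 = 0 ∧ Even mL}
  have hcard : (X.filter (fun m => m 0 = m L)).card
      = (X.filter (fun m => m 0 = 0 ∧ Even (m L))).card := by
    refine Finset.card_bij'
      (fun m _ => Function.update (Function.update m 0 0) L (2 * m L))
      (fun m _ => Function.update (Function.update m 0 (m L / 2)) L (m L / 2))
      ?_ ?_ ?_ ?_
    · intro m hm
      obtain ⟨hmX, heq⟩ := Finset.mem_filter.1 hm
      refine Finset.mem_filter.2 ⟨(hmem _).2 ?_, ?_, ?_⟩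
      · rw [key]
        rw [hmem, keym] at hmX
        omega
      · rw [Function.update_of_ne h0L, Function.update_self]
      · rw [Function.update_self]
        exact ⟨m L, by ring⟩
    · intro m hm
      obtain ⟨hmX, h0, hev⟩ := Finset.mem_filter.1 hm
      obtain ⟨k, hk⟩ := hev
      refine Finset.mem_filter.2 ⟨(hmem _).2 ?_, ?_⟩
      · rw [key]
        rw [hmem, keym] at hmX
        omega
      · rw [Function.update_self, Function.update_of_ne h0L, Function.update_self]
    · intro m hm
      obtain ⟨hmX, heq⟩ := Finset.mem_filter.1 hm
      funext i
      rcases eq_or_ne i L with rfl | hiL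
      · simp only [Function.update_self]
        omega
      · rcases eq_or_ne i 0 with rfl | hi0
        · simp only [Function.update_of_ne h0L, Function.update_self]
          omega
        · simp only [Function.update_of_ne hiL, Function.update_of_ne hi0]
    · intro m hm
      obtain ⟨hmX, h0, hev⟩ := Finset.mem_filter.1 hm
      obtain ⟨k, hk⟩ := hev
      funext i
      rcases eq_or_ne i L with rfl | hiL
      · simp only [Function.update_self]
        omega
      · rcases eq_or_ne i 0 with rfl | hi0
        · simp only [Function.update_of_ne h0L, Function.update_self]
          omega
        · simp only [Function.update_of_ne hiL, Function.update_of_ne hi0]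
  -- Step 2: the signed sum over non-fixed elements vanishes
  have hsum0 : ∑ m ∈ X.filter (fun m => ¬(m 0 = 0 ∧ Even (m L))),
      (-1 : ℤ) ^ (m L) = 0 := by
    refine Finset.sum_involution
      (fun m _ => if Even (m L)
        then Function.update (Function.update m 0 (m 0 - 1)) L (m L + 1)
        else Function.update (Function.update m 0 (m 0 + 1)) L (m L - 1))
      ?_ ?_ ?_ ?_
    · intro m hm
      clear hcard
      by_cases hev : Even (m L)
      · rw [if_pos hev]
        rw [Function.update_self, hev.neg_one_pow, (Even.add_one hev).neg_one_pow]
        ring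
      · rw [if_neg hev]
        have hodd : Odd (m L) := Nat.odd_iff.2 (Nat.not_even_iff.1 hev)
        obtain ⟨k, hk⟩ := hodd
        have heven : Even (m L - 1) := ⟨k, by omega⟩
        rw [Function.update_self, (Nat.odd_iff.2 (Nat.not_even_iff.1 hev)).neg_one_pow,
          heven.neg_one_pow]
        ring
    · intro m hm _
      clear hcard
      intro hcontra
      have hc := congrFun hcontra L
      by_cases hev : Even (m L)
      · rw [if_pos hev] at hc
        rw [Function.update_self] at hc
        omega
      · have hL1 : 1 ≤ m L := by
          rcases Nat.eq_zero_or_pos (m L) with h | h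
          · exact absurd (h ▸ Even.zero) hev
          · exact h
        rw [if_neg hev] at hc
        rw [Function.update_self] at hc
        omega
    · intro m hm
      clear hcard
      obtain ⟨hmX, hnot⟩ := Finset.mem_filter.1 hm
      rw [hmem, keym] at hmX
      by_cases hev : Even (m L)
      · have h00 : m 0 ≠ 0 := fun h => hnot ⟨h, hev⟩
        rw [if_pos hev]
        refine Finset.mem_filter.2 ⟨(hmem _).2 ?_, ?_⟩
        · rw [key]; omega
        · rw [Function.update_self]
          rintro ⟨-, hc⟩
          exact (Nat.even_add_one.1 hc) hev
      · have hL1 : 1 ≤ m L := by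
          rcases Nat.eq_zero_or_pos (m L) with h | h
          · exact absurd (h ▸ Even.zero) hev
          · exact h
        rw [if_neg hev]
        refine Finset.mem_filter.2 ⟨(hmem _).2 ?_, ?_⟩
        · rw [key]; omega
        · rintro ⟨hc, -⟩
          rw [Function.update_of_ne h0L, Function.update_self] at hc
          omega
    · intro m hm
      clear hcard
      obtain ⟨hmX, hnot⟩ := Finset.mem_filter.1 hm
      by_cases hev : Even (m L)
      · have h00 : m 0 ≠ 0 := fun h => hnot ⟨h, hev⟩
        rw [if_pos hev]
        have hcond : ¬ Even
            (Function.update (Function.update m 0 (m 0 - 1)) L (m L + 1) L) := by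
          rw [Function.update_self]
          intro h
          exact (Nat.even_add_one.1 h) hev
        rw [if_neg hcond]
        funext i
        rcases eq_or_ne i L with rfl | hiL
        · simp only [Function.update_self]
          omega
        · rcases eq_or_ne i 0 with rfl | hi0
          · simp only [Function.update_of_ne h0L, Function.update_self]
            omega
          · simp only [Function.update_of_ne hiL, Function.update_of_ne hi0]
      · have hL1 : 1 ≤ m L := by
          rcases Nat.eq_zero_or_pos (m L) with h | h
          · exact absurd (h ▸ Even.zero) hev
          · exact h
        rw [if_neg hev]
        have hcond : Even
            (Function.update (Function.update m 0 (m 0 + 1)) L (m L - 1) L) := by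
          rw [Function.update_self]
          rcases Nat.even_or_odd (m L) with h | h
          · exact absurd h hev
          · obtain ⟨k, hk⟩ := h
            exact ⟨k, by omega⟩
        rw [if_pos hcond]
        funext i
        rcases eq_or_ne i L with rfl | hiL
        · simp only [Function.update_self]
          omega
        · rcases eq_or_ne i 0 with rfl | hi0
          · simp only [Function.update_of_ne h0L, Function.update_self]
            omega
          · simp only [Function.update_of_ne hiL, Function.update_of_ne hi0]
  -- Step 3: the signed sum over fixed elements is the cardinality
  have hsum1 : ∑ m ∈ X.filter (fun m => m 0 = 0 ∧ Even (m L)),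
      (-1 : ℤ) ^ (m L) = ((X.filter (fun m => m 0 = 0 ∧ Even (m L))).card : ℤ) := by
    rw [Finset.card_eq_sum_ones, Nat.cast_sum]
    refine Finset.sum_congr rfl fun m hm => ?_
    obtain ⟨-, -, hev⟩ := Finset.mem_filter.1 hm
    simp [hev.neg_one_pow]
  rw [← Finset.sum_filter_add_sum_filter_not X (fun m => m 0 = 0 ∧ Even (m L))
    (fun m => (-1 : ℤ) ^ (m L)), hsum0, add_zero, hsum1, hcard]
end

section
/- Let ℓ ≥ 0 be an integer and let ω = exp(2πi/3) ∈ ℂ. For each k ∈ {1,2}, the number of tuples m ∈ X_{E_6}(ℓ) satisfying m_0 = m_1 = m_6 and m_2 = m_3 = m_5 equals the complex number ∑_{m ∈ X_{E_6}(ℓ)} ω^{k·(m_1 + 2m_3 + m_5 + 2m_6)}. (This is the cyclic sieving phenomenon of type E_6^{(1)}.) -/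
/-
Write `m` as the two triples `u = (m₀, m₁, m₆)` and `v = (m₂, m₅, m₃)`: they are compositions into
three parts of `a = m₀ + m₁ + m₆` and `b = m₂ + m₃ + m₅`, and `a + 2b + 3m₄ = ℓ`. The statistic
splits as `(u₁ + 2u₂) + (v₁ + 2v₂)` and `m` is fixed iff `u` and `v` are constant, so both sides
factor over the two triples, and it suffices to show that for `ζ = ω^k` (a root of `1 + ζ + ζ²`)
the sum of `ζ^(u₁ + 2u₂)` over the compositions `u` of `a` is `[3 ∣ a]`, which is also the number
of constant compositions of `a`. That sum is `3`-periodic in `a`, because the three diagonals added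
in passing from `a` to `a + 3` cancel, and its values at `a = 0, 1, 2` are `1, 0, 0`.
-/

open Finset

theorem sum_antidiagonalTuple_three {M : Type*} [AddCommMonoid M] (a : ℕ)
    (f : (Fin 3 → ℕ) → M) :
    ∑ u ∈ Nat.antidiagonalTuple 3 a, f u =
      ∑ n ∈ range (a + 1), ∑ z ∈ range (n + 1), f ![a - n, n - z, z] := by
  have hinv : ∀ u ∈ Nat.antidiagonalTuple 3 a, ![a - (u 1 + u 2), u 1 + u 2 - u 2, u 2] = u := by
    intro u hu
    rw [Nat.mem_antidiagonalTuple, Fin.sum_univ_three] at hu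
    funext i
    fin_cases i <;> simp <;> omega
  rw [sum_sigma']
  refine sum_nbij' (fun u => ⟨u 1 + u 2, u 2⟩) (fun p => ![a - p.1, p.1 - p.2, p.2])
    ?_ ?_ hinv ?_ fun u hu => congrArg f (hinv u hu).symm
  · intro u hu
    rw [Nat.mem_antidiagonalTuple, Fin.sum_univ_three] at hu
    simp only [mem_sigma, mem_range]
    omega
  · rintro ⟨n, z⟩ hp
    simp only [mem_sigma, mem_range] at hp
    simp only [Nat.mem_antidiagonalTuple, Fin.sum_univ_three, Fin.isValue,
      Matrix.cons_val_zero, Matrix.cons_val_one, Matrix.cons_val]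
    omega
  · rintro ⟨n, z⟩ hp
    simp only [mem_sigma, mem_range] at hp
    simp only [Fin.isValue, Matrix.cons_val_zero, Matrix.cons_val_one, Matrix.cons_val,
      Sigma.mk.injEq, heq_eq_eq, and_true]
    omega

section ThreeCompositions

variable {R : Type*} [CommRing R] {ζ : R}

-- The sum of `ζ ^ (u₁ + 2 u₂)` over the compositions `u = (a - n, n - z, z)` of `a`.
def weightedCompositionSum (ζ : R) (a : ℕ) : R :=
  ∑ n ∈ range (a + 1), ζ ^ n * ∑ z ∈ range (n + 1), ζ ^ z

theorem weightedCompositionSum_add_three (hζ : 1 + ζ + ζ ^ 2 = 0) (a : ℕ) :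
    weightedCompositionSum ζ (a + 3) = weightedCompositionSum ζ a := by
  simp only [weightedCompositionSum, sum_range_succ]
  linear_combination
    (ζ ^ (a + 1) * (∑ z ∈ range a, ζ ^ z + ζ ^ a + ζ ^ (a + 1)) + ζ ^ (2 * a + 4)) * hζ

theorem weightedCompositionSum_eq (hζ : 1 + ζ + ζ ^ 2 = 0) :
    ∀ a, weightedCompositionSum ζ a = if 3 ∣ a then 1 else 0
  | 0 => by simp [weightedCompositionSum]
  | 1 => by
    rw [if_neg (by norm_num)]
    simp only [weightedCompositionSum, sum_range_succ, sum_range_zero]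
    linear_combination hζ
  | 2 => by
    rw [if_neg (by norm_num)]
    simp only [weightedCompositionSum, sum_range_succ, sum_range_zero]
    linear_combination (1 + ζ ^ 2) * hζ
  | a + 3 => by
    rw [weightedCompositionSum_add_three hζ, weightedCompositionSum_eq hζ a]
    simp [Nat.dvd_add_self_right]

theorem sum_antidiagonalTuple_three_pow (hζ : 1 + ζ + ζ ^ 2 = 0) (a : ℕ) :
    ∑ u ∈ Nat.antidiagonalTuple 3 a, ζ ^ (u 1 + 2 * u 2) = if 3 ∣ a then 1 else 0 := by
  rw [sum_antidiagonalTuple_three, ← weightedCompositionSum_eq hζ, weightedCompositionSum]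
  refine sum_congr rfl fun n hn => ?_
  rw [mul_sum]
  refine sum_congr rfl fun z hz => ?_
  rw [mem_range] at hn hz
  rw [← pow_add]
  congr 1
  simp only [Matrix.cons_val]
  omega

end ThreeCompositions

theorem card_filter_antidiagonalTuple_three_const (a : ℕ) :
    #{u ∈ Nat.antidiagonalTuple 3 a | u 0 = u 1 ∧ u 1 = u 2} = if 3 ∣ a then 1 else 0 := by
  split_ifs with h
  · rw [card_eq_one]
    refine ⟨fun _ => a / 3, ?_⟩
    ext u
    simp only [mem_filter, Nat.mem_antidiagonalTuple, Fin.sum_univ_three, mem_singleton]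
    constructor
    · rintro ⟨hsum, h01, h12⟩
      funext i
      fin_cases i <;> simp <;> omega
    · rintro rfl
      simp only [and_self, and_true]
      omega
  · rw [card_eq_zero, filter_eq_empty_iff]
    simp only [Nat.mem_antidiagonalTuple, Fin.sum_univ_three]
    omega

def e6LevelWeights (ℓ : ℕ) : Finset (Fin 7 → ℕ) :=
  (Fintype.piFinset fun _ => range (ℓ + 1)).filter
    (fun m => ∑ i, (![1, 1, 2, 2, 3, 2, 1] : Fin 7 → ℕ) i * m i = ℓ)

theorem mem_e6LevelWeights {ℓ : ℕ} {m : Fin 7 → ℕ} :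
    m ∈ e6LevelWeights ℓ ↔ m 0 + m 1 + 2 * m 2 + 2 * m 3 + 3 * m 4 + 2 * m 5 + m 6 = ℓ := by
  simp only [e6LevelWeights, mem_filter, Fintype.mem_piFinset, mem_range, Fin.sum_univ_seven,
    Fin.isValue, Matrix.cons_val_zero, Matrix.cons_val_one, Matrix.cons_val, one_mul,
    and_iff_right_iff_imp]
  intro h i
  fin_cases i <;> simp <;> omega

def levelTriples (ℓ : ℕ) : Finset (ℕ × ℕ × ℕ) :=
  (range (ℓ + 1) ×ˢ range (ℓ + 1) ×ˢ range (ℓ + 1)).filter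
    (fun p => p.1 + 2 * p.2.1 + 3 * p.2.2 = ℓ)

theorem sum_e6LevelWeights_mul {R : Type*} [CommSemiring R] (ℓ : ℕ)
    (f g : (Fin 3 → ℕ) → R) :
    ∑ m ∈ e6LevelWeights ℓ, f ![m 0, m 1, m 6] * g ![m 2, m 5, m 3] =
      ∑ p ∈ levelTriples ℓ,
        (∑ u ∈ Nat.antidiagonalTuple 3 p.1, f u) * ∑ v ∈ Nat.antidiagonalTuple 3 p.2.1, g v := by
  have hsplit : ∀ m ∈ e6LevelWeights ℓ,
      (m 0 + m 1 + m 6, m 2 + m 3 + m 5, m 4) ∈ levelTriples ℓ := by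
    intro m hm
    rw [mem_e6LevelWeights] at hm
    simp only [levelTriples, mem_filter, mem_product, mem_range]
    omega
  rw [← sum_fiberwise_of_maps_to hsplit]
  refine sum_congr rfl fun ⟨a, b, c⟩ hp => ?_
  rw [sum_mul_sum, ← sum_product']
  refine sum_nbij' (fun m => (![m 0, m 1, m 6], ![m 2, m 5, m 3]))
    (fun uv => ![uv.1 0, uv.1 1, uv.2 0, uv.2 2, c, uv.2 1, uv.1 2]) ?_ ?_ ?_ ?_ ?_
  · intro m hm
    simp only [mem_filter, Prod.mk.injEq] at hm
    obtain ⟨-, rfl, rfl, rfl⟩ := hm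
    simp only [mem_product, Nat.mem_antidiagonalTuple, Fin.sum_univ_three, Fin.isValue,
      Matrix.cons_val_zero, Matrix.cons_val_one, Matrix.cons_val, true_and]
    omega
  · rintro ⟨u, v⟩ huv
    simp only [mem_product, Nat.mem_antidiagonalTuple, Fin.sum_univ_three] at huv
    simp only [levelTriples, mem_filter, mem_product, mem_range] at hp
    simp only [mem_filter, mem_e6LevelWeights, Prod.mk.injEq, Fin.isValue, Matrix.cons_val_zero,
      Matrix.cons_val_one, Matrix.cons_val, and_true]
    omega
  · intro m hm
    simp only [mem_filter, Prod.mk.injEq] at hm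
    obtain ⟨-, -, -, rfl⟩ := hm
    funext i
    fin_cases i <;> rfl
  · rintro ⟨u, v⟩ -
    simp only [Prod.mk.injEq]
    constructor <;> funext i <;> fin_cases i <;> rfl
  · intro m _
    rfl

/-- **Cyclic sieving phenomenon for type `E_6^(1)`.**
For `ℓ ≥ 0`, `ω = exp(2πi/3)` and `k ∈ {1,2}`, among the `7`-tuples `m` of nonnegative
integers with `m_0 + m_1 + 2m_2 + 2m_3 + 3m_4 + 2m_5 + m_6 = ℓ`, the number of those with
`m_0 = m_1 = m_6` and `m_2 = m_3 = m_5` equals `∑_m ω^(k·(m_1 + 2m_3 + m_5 + 2m_6))`. -/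
theorem stmt_5 (ℓ : ℕ) (k : ℕ) (hk : k = 1 ∨ k = 2) :
    let ν : Fin 7 → ℕ := ![1, 1, 2, 2, 3, 2, 1]
    let X : Finset (Fin 7 → ℕ) :=
      (Fintype.piFinset fun _ => Finset.range (ℓ + 1)).filter
        (fun m => ∑ i, ν i * m i = ℓ)
    ((X.filter (fun m => m 0 = m 1 ∧ m 1 = m 6 ∧ m 2 = m 3 ∧ m 3 = m 5)).card : ℂ)
      = ∑ m ∈ X, Complex.exp (2 * Real.pi * Complex.I / 3) ^
          (k * (m 1 + 2 * m 3 + m 5 + 2 * m 6)) := by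
  intro ν X
  have hX : X = e6LevelWeights ℓ := rfl
  set ζ := Complex.exp (2 * Real.pi * Complex.I / 3) ^ k
  have hζ : 1 + ζ + ζ ^ 2 = 0 := by
    have hprim := (Complex.isPrimitiveRoot_exp 3 (by norm_num)).pow_of_coprime k
      (by rcases hk with rfl | rfl <;> norm_num)
    simpa [sum_range_succ] using hprim.geom_sum_eq_zero (by norm_num)
  let constIndicator (u : Fin 3 → ℕ) : ℂ := if u 0 = u 1 ∧ u 1 = u 2 then 1 else 0
  rw [hX, natCast_card_filter]
  calc _ = ∑ m ∈ e6LevelWeights ℓ,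
          constIndicator ![m 0, m 1, m 6] * constIndicator ![m 2, m 5, m 3] := by
          refine sum_congr rfl fun m _ => ?_
          rw [ite_zero_mul_ite_zero, mul_one]
          refine if_congr ?_ rfl rfl
          simp only [Matrix.cons_val]
          omega
    _ = ∑ p ∈ levelTriples ℓ, (if 3 ∣ p.1 then 1 else 0) * (if 3 ∣ p.2.1 then 1 else 0) := by
          rw [sum_e6LevelWeights_mul]
          simp only [constIndicator, sum_boole, card_filter_antidiagonalTuple_three_const,
            Nat.cast_ite, Nat.cast_one, Nat.cast_zero]
    _ = ∑ m ∈ e6LevelWeights ℓ, ζ ^ (m 1 + 2 * m 6) * ζ ^ (m 5 + 2 * m 3) := by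
          symm
          refine (sum_e6LevelWeights_mul ℓ (fun u => ζ ^ (u 1 + 2 * u 2))
            (fun v => ζ ^ (v 1 + 2 * v 2))).trans ?_
          simp only [sum_antidiagonalTuple_three_pow hζ]
    _ = _ := sum_congr rfl fun m _ => by rw [← pow_add, ← pow_mul]; ring_nf
end

section
/- Let ℓ ≥ 0 be an integer. Then the number of tuples m ∈ X_{E_7}(ℓ) satisfying m_0 = m_7, m_1 = m_6 and m_3 = m_5 equals ∑_{m ∈ X_{E_7}(ℓ)} (−1)^{m_2 + m_5 + m_7}. (This is the cyclic sieving phenomenon of type E_7^{(1)}.) -/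
/-!
`pairToggle i j` moves one unit between coordinates `i` and `j` (from `i` to `j`
when `m j` is even, back otherwise). Off the tuples with `m i = 0` and `m j` even it is a
fixed-point-free involution that preserves `m i + m j` and flips the parity of `m j`; so when `i`
and `j` have the same dual mark and only `j` enters `ev`, it is a sign-reversing involution of
`X_{E_7}(ℓ)`. Doing this for the pairs `(0,7)`, `(1,2)`, `(3,5)` in turn leaves the tuples
`(0, 0, 2b, 0, e, 2d, c, 2a)`, each with sign `+1`, and these correspond to the `C_2`-fixed
tuples `(a, b, c, d, e, d, b, a)`.
-/

open Finset Function

section PairToggle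

variable {ι : Type*} [DecidableEq ι] {i j k : ι} {m : ι → ℕ}

def pairToggle (i j : ι) (m : ι → ℕ) : ι → ℕ :=
  if Even (m j) then update (update m i (m i - 1)) j (m j + 1)
  else update (update m i (m i + 1)) j (m j - 1)

lemma pairToggle_apply_left (hij : i ≠ j) :
    pairToggle i j m i = if Even (m j) then m i - 1 else m i + 1 := by
  unfold pairToggle; split_ifs <;> simp [hij]

lemma pairToggle_apply_right :
    pairToggle i j m j = if Even (m j) then m j + 1 else m j - 1 := by
  unfold pairToggle; split_ifs <;> simp

lemma pairToggle_apply_of_ne (hi : k ≠ i) (hj : k ≠ j) : pairToggle i j m k = m k := by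
  unfold pairToggle; split_ifs <;> simp [hi, hj]

lemma pairToggle_ne_self : pairToggle i j m ≠ m := fun h => by
  have hj := congrFun h j
  rw [pairToggle_apply_right] at hj
  split_ifs at hj with he
  · omega
  · exact he (by rw [Nat.even_iff]; omega)

lemma not_fixed_pairToggle (hij : i ≠ j) :
    ¬(pairToggle i j m i = 0 ∧ Even (pairToggle i j m j)) := by
  rw [pairToggle_apply_left hij, pairToggle_apply_right]
  split_ifs with he
  · simp [Nat.even_add_one, he]
  · simp

lemma pairToggle_add (hij : i ≠ j) (h : ¬(m i = 0 ∧ Even (m j))) :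
    pairToggle i j m i + pairToggle i j m j = m i + m j := by
  rw [pairToggle_apply_left hij, pairToggle_apply_right]
  split_ifs with he
  · have : m i ≠ 0 := fun h0 => h ⟨h0, he⟩
    omega
  · have : m j ≠ 0 := by rintro h0; simp [h0] at he
    omega

lemma pairToggle_pairToggle (hij : i ≠ j) (h : ¬(m i = 0 ∧ Even (m j))) :
    pairToggle i j (pairToggle i j m) = m := by
  ext k
  rw [Nat.even_iff] at h
  by_cases hki : k = i
  · subst hki
    simp only [pairToggle_apply_left hij, pairToggle_apply_right, Nat.even_iff]
    split_ifs <;> omega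
  by_cases hkj : k = j
  · subst hkj
    simp only [pairToggle_apply_right, Nat.even_iff]
    split_ifs <;> omega
  simp only [pairToggle_apply_of_ne hki hkj]

lemma sum_eq_sum_filter_of_pairToggle {M : Type*} [AddCommMonoid M] {f : (ι → ℕ) → M}
    {s : Finset (ι → ℕ)} (hij : i ≠ j)
    (hs : ∀ m ∈ s, ¬(m i = 0 ∧ Even (m j)) → pairToggle i j m ∈ s)
    (hf : ∀ m ∈ s, ¬(m i = 0 ∧ Even (m j)) → f m + f (pairToggle i j m) = 0) :
    ∑ m ∈ s, f m = ∑ m ∈ s with m i = 0 ∧ Even (m j), f m := by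
  have hmoved : ∑ m ∈ s with ¬(m i = 0 ∧ Even (m j)), f m = 0 := by
    refine sum_involution (fun m _ => pairToggle i j m) ?_ (fun _ _ _ => pairToggle_ne_self) ?_ ?_
    · intro m hm
      rw [mem_filter] at hm
      exact hf m hm.1 hm.2
    · intro m hm
      rw [mem_filter] at hm ⊢
      exact ⟨hs m hm.1 hm.2, not_fixed_pairToggle hij⟩
    · intro m hm
      exact pairToggle_pairToggle hij (mem_filter.1 hm).2
  rw [← sum_filter_add_sum_filter_not s (fun m => m i = 0 ∧ Even (m j)), hmoved, add_zero]

lemma neg_one_pow_sum_pairToggle {R : Type*} [Monoid R] [HasDistribNeg R] {S : Finset ι}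
    (hi : i ∉ S) (hj : j ∈ S) :
    (-1 : R) ^ (∑ k ∈ S, pairToggle i j m k) = -(-1) ^ (∑ k ∈ S, m k) := by
  have hS : ∀ k ∈ S.erase j, pairToggle i j m k = m k := fun k hk =>
    pairToggle_apply_of_ne (fun h => hi (h ▸ mem_of_mem_erase hk)) (mem_erase.1 hk).1
  rw [← add_sum_erase _ _ hj, ← add_sum_erase _ _ hj, sum_congr rfl hS, pow_add, pow_add,
    pairToggle_apply_right, ← neg_mul]
  congr 1
  split_ifs with he
  · rw [pow_succ, mul_neg_one]
  · obtain ⟨n, hn⟩ := Nat.not_even_iff_odd.1 he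
    rw [hn, Nat.add_sub_cancel, pow_succ, mul_neg_one, neg_neg]

variable [Fintype ι] {ν : ι → ℕ} {ℓ : ℕ}

def levelTuples (ν : ι → ℕ) (ℓ : ℕ) : Finset (ι → ℕ) :=
  (Fintype.piFinset fun _ => range (ℓ + 1)).filter (fun m => ∑ i, ν i * m i = ℓ)

lemma mem_levelTuples (hν : ∀ i, 0 < ν i) :
    m ∈ levelTuples ν ℓ ↔ ∑ i, ν i * m i = ℓ := by
  refine ⟨fun h => (mem_filter.1 h).2, fun h => mem_filter.2 ⟨?_, h⟩⟩
  refine Fintype.mem_piFinset.2 fun i => mem_range_succ_iff.2 ?_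
  calc m i ≤ ν i * m i := Nat.le_mul_of_pos_left _ (hν i)
    _ ≤ ∑ k, ν k * m k :=
      single_le_sum (f := fun k => ν k * m k) (fun k _ => Nat.zero_le _) (mem_univ i)
    _ = ℓ := h

lemma sum_mul_pairToggle (hij : i ≠ j) (hν : ν i = ν j) (h : ¬(m i = 0 ∧ Even (m j))) :
    ∑ k, ν k * pairToggle i j m k = ∑ k, ν k * m k := by
  have hj : j ∈ univ.erase i := mem_erase.2 ⟨hij.symm, mem_univ j⟩
  rw [← add_sum_erase _ _ (mem_univ i), ← add_sum_erase _ _ hj,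
    ← add_sum_erase _ _ (mem_univ i), ← add_sum_erase _ _ hj, ← add_assoc, ← add_assoc, hν,
    ← mul_add, ← mul_add, pairToggle_add hij h]
  congr 1
  refine sum_congr rfl fun k hk => ?_
  obtain ⟨hkj, hk⟩ := mem_erase.1 hk
  rw [pairToggle_apply_of_ne (mem_erase.1 hk).1 hkj]

lemma pairToggle_mem_levelTuples (hν : ∀ i, 0 < ν i) (hij : i ≠ j) (hνij : ν i = ν j)
    (hm : m ∈ levelTuples ν ℓ) (h : ¬(m i = 0 ∧ Even (m j))) :
    pairToggle i j m ∈ levelTuples ν ℓ := by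
  rw [mem_levelTuples hν] at hm ⊢
  rwa [sum_mul_pairToggle hij hνij h]

lemma pairToggle_mem_filter_levelTuples (hν : ∀ i, 0 < ν i) (hij : i ≠ j) (hνij : ν i = ν j)
    {P : (ι → ℕ) → Prop} [DecidablePred P] (hP : ∀ m, P m → P (pairToggle i j m))
    (hm : m ∈ {m ∈ levelTuples ν ℓ | P m}) (h : ¬(m i = 0 ∧ Even (m j))) :
    pairToggle i j m ∈ {m ∈ levelTuples ν ℓ | P m} := by
  rw [mem_filter] at hm ⊢
  exact ⟨pairToggle_mem_levelTuples hν hij hνij hm.1 h, hP m hm.2⟩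

end PairToggle

def e7DualMarks : Fin 8 → ℕ := ![1, 2, 2, 3, 4, 3, 2, 1]

lemma mem_levelTuples_e7DualMarks {ℓ : ℕ} {m : Fin 8 → ℕ} :
    m ∈ levelTuples e7DualMarks ℓ ↔
      m 0 + 2 * m 1 + 2 * m 2 + 3 * m 3 + 4 * m 4 + 3 * m 5 + 2 * m 6 + m 7 = ℓ := by
  rw [mem_levelTuples (by decide)]
  simp [e7DualMarks, Fin.sum_univ_eight]

lemma card_symmetric_levelTuples_e7DualMarks (ℓ : ℕ) :
    #{m ∈ levelTuples e7DualMarks ℓ | m 0 = m 7 ∧ m 1 = m 6 ∧ m 3 = m 5} =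
      #{m ∈ levelTuples e7DualMarks ℓ |
        ((m 0 = 0 ∧ Even (m 7)) ∧ (m 1 = 0 ∧ Even (m 2))) ∧ (m 3 = 0 ∧ Even (m 5))} := by
  refine card_nbij' (fun m => ![0, 0, 2 * m 1, 0, m 4, 2 * m 3, m 2, 2 * m 0])
    (fun m => ![m 7 / 2, m 2 / 2, m 6, m 5 / 2, m 4, m 5 / 2, m 2 / 2, m 7 / 2])
    ?_ ?_ ?_ ?_ <;> intro m hm <;>
    simp only [mem_coe, mem_filter, mem_levelTuples_e7DualMarks, Nat.even_iff] at hm ⊢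
  · simp only [Matrix.cons_val, Matrix.cons_val_zero, Matrix.cons_val_one, Fin.isValue, true_and]
    omega
  · simp only [Matrix.cons_val, Matrix.cons_val_zero, Matrix.cons_val_one, Fin.isValue, and_true]
    omega
  all_goals
    funext k
    fin_cases k <;> simp only [Fin.reduceFinMk, Fin.zero_eta, Fin.mk_one, Matrix.cons_val,
      Matrix.cons_val_zero, Matrix.cons_val_one, Fin.isValue] <;> omega

lemma sum_neg_one_pow_levelTuples_e7DualMarks (ℓ : ℕ) :
    ∑ m ∈ levelTuples e7DualMarks ℓ, (-1 : ℤ) ^ (m 2 + m 5 + m 7) =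
      #{m ∈ levelTuples e7DualMarks ℓ |
        ((m 0 = 0 ∧ Even (m 7)) ∧ (m 1 = 0 ∧ Even (m 2))) ∧ (m 3 = 0 ∧ Even (m 5))} := by
  set X := levelTuples e7DualMarks ℓ
  have hν : ∀ i, 0 < e7DualMarks i := by decide
  have hev : ∀ m : Fin 8 → ℕ, m 2 + m 5 + m 7 = ∑ k ∈ {2, 5, 7}, m k := by
    simp [add_assoc]
  have hsign : ∀ i j : Fin 8, i ∉ ({2, 5, 7} : Finset _) → j ∈ ({2, 5, 7} : Finset _) →
      ∀ m : Fin 8 → ℕ, (-1 : ℤ) ^ (∑ k ∈ {2, 5, 7}, m k) +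
        (-1) ^ (∑ k ∈ {2, 5, 7}, pairToggle i j m k) = 0 := fun i j hi hj m => by
    rw [neg_one_pow_sum_pairToggle hi hj, add_neg_cancel]
  have h₀₇ : ∀ m ∈ X, ¬(m 0 = 0 ∧ Even (m 7)) → pairToggle 0 7 m ∈ X :=
    fun m hm h => pairToggle_mem_levelTuples hν (by decide) (by rfl) hm h
  have h₁₂ : ∀ m ∈ {m ∈ X | m 0 = 0 ∧ Even (m 7)}, ¬(m 1 = 0 ∧ Even (m 2)) →
      pairToggle 1 2 m ∈ {m ∈ X | m 0 = 0 ∧ Even (m 7)} :=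
    fun m hm h => pairToggle_mem_filter_levelTuples hν (by decide) (by rfl)
      (fun m => by simp [pairToggle_apply_of_ne]) hm h
  have h₃₅ : ∀ m ∈ {m ∈ X | (m 0 = 0 ∧ Even (m 7)) ∧ (m 1 = 0 ∧ Even (m 2))},
      ¬(m 3 = 0 ∧ Even (m 5)) →
      pairToggle 3 5 m ∈ {m ∈ X | (m 0 = 0 ∧ Even (m 7)) ∧ (m 1 = 0 ∧ Even (m 2))} :=
    fun m hm h => pairToggle_mem_filter_levelTuples hν (by decide) (by rfl)
      (fun m => by simp [pairToggle_apply_of_ne]) hm h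
  simp only [hev]
  rw [sum_eq_sum_filter_of_pairToggle (by decide) h₀₇
      (fun m _ _ => hsign 0 7 (by decide) (by decide) m),
    sum_eq_sum_filter_of_pairToggle (by decide) h₁₂
      (fun m _ _ => hsign 1 2 (by decide) (by decide) m), filter_filter,
    sum_eq_sum_filter_of_pairToggle (by decide) h₃₅
      (fun m _ _ => hsign 3 5 (by decide) (by decide) m), filter_filter,
    card_eq_sum_ones, Nat.cast_sum, Nat.cast_one]
  refine sum_congr rfl fun m hm => ?_
  obtain ⟨-, ⟨⟨-, h7⟩, -, h2⟩, -, h5⟩ := mem_filter.1 hm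
  rw [← hev]
  exact ((h2.add h5).add h7).neg_one_pow

/-- **Cyclic sieving phenomenon for type `E_7^(1)`.**
For `ℓ ≥ 0`, among the `8`-tuples `m` of nonnegative integers with
`m_0 + 2m_1 + 2m_2 + 3m_3 + 4m_4 + 3m_5 + 2m_6 + m_7 = ℓ`, the number of those with
`m_0 = m_7`, `m_1 = m_6` and `m_3 = m_5` equals `∑_m (-1)^(m_2 + m_5 + m_7)`. -/
theorem stmt_6 (ℓ : ℕ) :
    let ν : Fin 8 → ℕ := ![1, 2, 2, 3, 4, 3, 2, 1]
    let X : Finset (Fin 8 → ℕ) :=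
      (Fintype.piFinset fun _ => Finset.range (ℓ + 1)).filter
        (fun m => ∑ i, ν i * m i = ℓ)
    ((X.filter (fun m => m 0 = m 7 ∧ m 1 = m 6 ∧ m 3 = m 5)).card : ℤ)
      = ∑ m ∈ X, (-1 : ℤ) ^ (m 2 + m 5 + m 7) := by
  change (#{m ∈ levelTuples e7DualMarks ℓ | m 0 = m 7 ∧ m 1 = m 6 ∧ m 3 = m 5} : ℤ) =
    ∑ m ∈ levelTuples e7DualMarks ℓ, (-1 : ℤ) ^ (m 2 + m 5 + m 7)
  rw [card_symmetric_levelTuples_e7DualMarks, sum_neg_one_pow_levelTuples_e7DualMarks]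
end

section
/- Let a ≥ 1 and k ≥ 1 be integers, ℓ ≥ 0 an integer, and t_1, …, t_k nonnegative integers with t_1 ≥ 1, t_k ≥ 1 and t_1 + ⋯ + t_k ≥ 2. Let ν be the tuple consisting of t_1 copies of a, followed by t_2 copies of 2a, …, followed by t_k copies of ka, and let M be the number of tuples m of nonnegative integers (with the same number of entries as ν) such that ∑_j ν_j·m_j = ℓ. If a does not divide ℓ, then M = 0. If a divides ℓ, write L = ℓ/a; then M = ∑ f_1(i_1) · ∏_{r=2}^k g_r(i_r), where the sum runs over all k-tuples (i_1, …, i_k) of nonnegative integers satisfying ∑_{r=1}^k r·i_r ≤ L, i_1 = 0 whenever t_1 = 1, and i_r = 0 whenever t_r = 0 (2 ≤ r ≤ k); here f_1(i_1) = C(i_1 + t_1 − 2, t_1 − 2) if t_1 ≥ 2 and f_1(i_1) = 1 if t_1 = 1, and g_r(i_r) = C(i_r + t_r − 1, t_r − 1) if t_r ≥ 1 and g_r(i_r) = 1 if t_r = 0. -/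
/-!
Split the positions of `ν` into blocks with `finSigmaFinEquiv`: a position in block `r` has
weight `a (r + 1)`. Hence every weighted sum is a multiple of `a`, and for `ℓ = a L` one counts
the solutions of `∑ (r_j + 1) m_j = L`. The first position has weight one and serves as a slack
variable, so a solution is the same as a choice of the sums `i_r` of the other entries of each
block with `∑ (r + 1) i_r ≤ L`, together with a composition of each `i_r` into `t_r` parts
(`t_1 - 1` parts for the first block). Stars and bars counts these by `multichoose`, which is
the binomial coefficient of the statement and vanishes exactly when the side conditions fail.
-/

open Finset

theorem Nat.multichoose_eq_zero_iff {n i : ℕ} : n.multichoose i = 0 ↔ n = 0 ∧ i ≠ 0 := by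
  rw [Nat.multichoose_eq, Nat.choose_eq_zero_iff]
  omega

theorem Nat.multichoose_eq_ite {n i : ℕ} (h : n = 0 → i = 0) :
    n.multichoose i = if n = 0 then 1 else (i + n - 1).choose (n - 1) := by
  split_ifs with hn
  · rw [hn, h hn, Nat.multichoose_zero_right]
  · rw [Nat.multichoose_eq, add_comm n]
    exact Nat.choose_symm_of_eq_add (by omega)

theorem Finset.card_piAntidiag_nat {ι : Type*} [DecidableEq ι] (s : Finset ι) (n : ℕ) :
    #(piAntidiag s n) = (#s).multichoose n := by
  rw [← card_finsuppAntidiag_nat_eq_multichoose]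
  simp [finsuppAntidiag]

theorem Fin.sum_univ_castLE_eq_sum_Iio {M : Type*} [AddCommMonoid M] {k : ℕ} (f : Fin k → M)
    (r : Fin k) : ∑ i : Fin r, f (Fin.castLE r.2.le i) = ∑ s ∈ Iio r, f s := by
  have : Iio r = univ.map (Fin.castLEEmb r.2.le) := by
    ext x
    simp only [mem_map, mem_univ, true_and, Fin.castLEEmb_apply, mem_Iio]
    exact ⟨fun h => ⟨⟨x, h⟩, rfl⟩, by rintro ⟨y, rfl⟩; exact y.2⟩
  rw [this, sum_map]
  rfl

theorem card_prefixSum_le_finSigmaFinEquiv {k : ℕ} (t : Fin k → ℕ)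
    (x : (r : Fin k) × Fin (t r)) :
    #{r : Fin k | (∑ s : Fin k, if s ≤ r then t s else 0) ≤ (finSigmaFinEquiv x : ℕ)} = x.1 := by
  obtain ⟨r, s⟩ := x
  refine (congrArg card ?_).trans (Fin.card_Iio r)
  ext r'
  simp only [mem_filter, mem_univ, true_and, mem_Iio, ← sum_filter, filter_ge_eq_Iic,
    finSigmaFinEquiv_apply, Fin.sum_univ_castLE_eq_sum_Iio]
  constructor
  · intro h
    by_contra! hr
    have hsub := sum_le_sum_of_subset (f := t) (Iic_subset_Iic.2 hr)
    rw [← Iio_insert, sum_insert notMem_Iio_self] at hsub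
    omega
  · intro h
    refine (sum_le_sum_of_subset fun i hi => ?_).trans (Nat.le_add_right _ _)
    exact mem_Iio.2 ((mem_Iic.1 hi).trans_lt h)

theorem card_filter_finSigmaFinEquiv_symm_fst {k : ℕ} (t : Fin k → ℕ) (r : Fin k) :
    #{j : Fin (∑ r, t r) | (finSigmaFinEquiv.symm j).1 = r} = t r := by
  rw [← Fintype.card_fin (t r), ← card_univ]
  symm
  refine card_bij (fun s _ => finSigmaFinEquiv ⟨r, s⟩) (by simp) (fun s _ s' _ h => ?_) ?_
  · simpa using h
  · intro j hj
    obtain ⟨⟨r', s⟩, rfl⟩ := finSigmaFinEquiv.surjective j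
    simp only [mem_filter, mem_univ, true_and, Equiv.symm_apply_apply] at hj
    subst hj
    exact ⟨s, mem_univ _, rfl⟩

section BlockDecomposition

variable {ι κ : Type*} [DecidableEq ι] (blk : ι → κ) (j₀ : ι)

def blockGlue (x : ℕ) (g : κ → ι → ℕ) (j : ι) : ℕ := if j = j₀ then x else g (blk j) j

@[simp]
theorem blockGlue_self (x : ℕ) (g : κ → ι → ℕ) : blockGlue blk j₀ x g j₀ = x := if_pos rfl

variable [Fintype ι] [DecidableEq κ]

def blockErase (r : κ) : Finset ι := ({j | blk j = r} : Finset ι).erase j₀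

variable {blk j₀} in
theorem mem_blockErase {j : ι} {r : κ} : j ∈ blockErase blk j₀ r ↔ j ≠ j₀ ∧ blk j = r := by
  simp [blockErase]

def blockSplit (m : ι → ℕ) (r : κ) (j : ι) : ℕ := if j ∈ blockErase blk j₀ r then m j else 0

theorem blockSplit_mem_piAntidiag (m : ι → ℕ) (r : κ) :
    blockSplit blk j₀ m r ∈ piAntidiag (blockErase blk j₀ r) (∑ j ∈ blockErase blk j₀ r, m j) :=
  mem_piAntidiag.2
    ⟨sum_congr rfl fun _ hj => if_pos hj, fun _ hj => by_contra fun h => hj (if_neg h)⟩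

theorem sum_blockGlue (x : ℕ) (g : κ → ι → ℕ) (r : κ) :
    ∑ j ∈ blockErase blk j₀ r, blockGlue blk j₀ x g j = ∑ j ∈ blockErase blk j₀ r, g r j :=
  sum_congr rfl fun j hj => by
    obtain ⟨hne, rfl⟩ := mem_blockErase.1 hj
    exact if_neg hne

theorem blockGlue_blockSplit (m : ι → ℕ) : blockGlue blk j₀ (m j₀) (blockSplit blk j₀ m) = m := by
  funext j
  by_cases hj : j = j₀
  · simp [blockGlue, hj]
  · simp [blockGlue, blockSplit, hj, mem_blockErase]

theorem blockSplit_blockGlue (x : ℕ) {g : κ → ι → ℕ}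
    (hg : ∀ r j, g r j ≠ 0 → j ∈ blockErase blk j₀ r) :
    blockSplit blk j₀ (blockGlue blk j₀ x g) = g := by
  funext r j
  by_cases hj : j ∈ blockErase blk j₀ r
  · obtain ⟨hne, rfl⟩ := mem_blockErase.1 hj
    simp [blockSplit, blockGlue, hj, hne]
  · simp only [blockSplit, if_neg hj]
    exact (by_contra fun h => hj (hg r j (Ne.symm h)))

theorem sum_weight_eq_add_sum_blockErase [Fintype κ] (c : κ → ℕ) (hj₀ : c (blk j₀) = 1)
    (m : ι → ℕ) : ∑ j, c (blk j) * m j = m j₀ + ∑ r, c r * ∑ j ∈ blockErase blk j₀ r, m j := by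
  rw [← add_sum_erase _ _ (mem_univ j₀), hj₀, one_mul, ← sum_fiberwise _ blk]
  congr 1
  refine sum_congr rfl fun r _ => ?_
  rw [blockErase, ← filter_erase, mul_sum]
  exact sum_congr rfl fun j hj => by rw [(mem_filter.1 hj).2]

end BlockDecomposition

section WeightedCompositions

variable {ι κ : Type*} [Fintype ι] [DecidableEq ι] [Fintype κ] [DecidableEq κ]
  (blk : ι → κ) (c : κ → ℕ) (j₀ : ι)

theorem card_filter_blockSums_eq (hj₀ : c (blk j₀) = 1) {L B : ℕ} (hLB : L ≤ B) {i : κ → ℕ}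
    (hiL : ∀ r, i r ≤ L) (hS : ∑ r, c r * i r ≤ L) :
    #{m ∈ {m ∈ Fintype.piFinset fun _ : ι => range (B + 1) | ∑ j, c (blk j) * m j = L} |
        (fun r => ∑ j ∈ blockErase blk j₀ r, m j) = i} =
      ∏ r, (#(blockErase blk j₀ r)).multichoose (i r) := by
  simp_rw [← card_piAntidiag_nat, ← Fintype.card_piFinset]
  have weight := sum_weight_eq_add_sum_blockErase blk j₀ c hj₀
  refine card_bij' (fun m _ => blockSplit blk j₀ m)
    (fun g _ => blockGlue blk j₀ (L - ∑ r, c r * i r) g) ?_ ?_ ?_ ?_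
  · intro m hm
    obtain ⟨-, rfl⟩ := mem_filter.1 hm
    exact Fintype.mem_piFinset.2 (blockSplit_mem_piAntidiag blk j₀ m)
  · intro g hg
    simp only [Fintype.mem_piFinset, mem_piAntidiag] at hg
    have block_sum (r : κ) : ∑ j ∈ blockErase blk j₀ r, blockGlue blk j₀ (L - ∑ r, c r * i r) g j
        = i r := (sum_blockGlue blk j₀ _ g r).trans (hg r).1
    simp only [mem_filter, Fintype.mem_piFinset, mem_range]
    refine ⟨⟨fun j => ?_, ?_⟩, funext block_sum⟩
    · by_cases hj : j = j₀
      · rw [hj, blockGlue_self]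
        omega
      · simp only [blockGlue, if_neg hj]
        calc g (blk j) j ≤ ∑ j' ∈ blockErase blk j₀ (blk j), g (blk j) j' :=
              single_le_sum (fun _ _ => Nat.zero_le _) (mem_blockErase.2 ⟨hj, rfl⟩)
          _ = i (blk j) := (hg _).1
          _ < B + 1 := by linarith [hiL (blk j)]
    · simp only [weight, block_sum, blockGlue_self]
      omega
  · intro m hm
    obtain ⟨⟨-, hsum⟩, rfl⟩ := mem_filter.1 hm |>.imp_left mem_filter.1
    rw [weight] at hsum
    beta_reduce
    rw [show L - _ = m j₀ by omega, blockGlue_blockSplit]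
  · intro g hg
    simp only [Fintype.mem_piFinset, mem_piAntidiag] at hg
    exact blockSplit_blockGlue blk j₀ _ fun r j => (hg r).2 j

theorem card_weightedCompositions (hc : ∀ r, 0 < c r) (hj₀ : c (blk j₀) = 1) {L B : ℕ}
    (hLB : L ≤ B) :
    #{m ∈ Fintype.piFinset fun _ : ι => range (B + 1) | ∑ j, c (blk j) * m j = L} =
      ∑ i ∈ {i ∈ Fintype.piFinset fun _ : κ => range (L + 1) | ∑ r, c r * i r ≤ L},
        ∏ r, (#(blockErase blk j₀ r)).multichoose (i r) := by
  rw [card_eq_sum_card_fiberwise (f := fun m r => ∑ j ∈ blockErase blk j₀ r, m j)]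
  · refine sum_congr rfl fun i hi => ?_
    obtain ⟨hiL, hS⟩ := mem_filter.1 hi
    exact card_filter_blockSums_eq blk c j₀ hj₀ hLB
      (fun r => Nat.lt_succ_iff.1 (mem_range.1 (Fintype.mem_piFinset.1 hiL r))) hS
  · intro m hm
    have hsum := (mem_filter.1 hm).2
    rw [sum_weight_eq_add_sum_blockErase blk j₀ c hj₀] at hsum
    have hS : ∑ r, c r * ∑ j ∈ blockErase blk j₀ r, m j ≤ L := by omega
    refine mem_filter.2 ⟨Fintype.mem_piFinset.2 fun r => mem_range.2 (Nat.lt_succ_of_le ?_), hS⟩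
    calc ∑ j ∈ blockErase blk j₀ r, m j
        ≤ c r * ∑ j ∈ blockErase blk j₀ r, m j := Nat.le_mul_of_pos_left _ (hc r)
      _ ≤ L := (single_le_sum (fun r _ => Nat.zero_le _) (mem_univ r)).trans hS

end WeightedCompositions

theorem sum_prod_multichoose_eq_sum_choose {κ : Type*} [Fintype κ] [DecidableEq κ]
    (s : Finset (κ → ℕ)) (t : κ → ℕ) {r₀ : κ} (ht : 1 ≤ t r₀) :
    ∑ i ∈ s, ∏ r, (if r = r₀ then t r - 1 else t r).multichoose (i r) =
      ∑ i ∈ s with (t r₀ = 1 → i r₀ = 0) ∧ ∀ r, r ≠ r₀ → t r = 0 → i r = 0,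
        (if t r₀ = 1 then 1 else (i r₀ + t r₀ - 2).choose (t r₀ - 2)) *
          ∏ r ∈ univ.erase r₀, if t r = 0 then 1 else (i r + t r - 1).choose (t r - 1) := by
  rw [← sum_filter_of_ne (p := fun i : κ → ℕ =>
    (t r₀ = 1 → i r₀ = 0) ∧ ∀ r, r ≠ r₀ → t r = 0 → i r = 0) fun i _ hi => ?_]
  · refine sum_congr rfl fun i hi => ?_
    obtain ⟨h0, hr⟩ := (mem_filter.1 hi).2
    rw [← mul_prod_erase _ _ (mem_univ r₀), if_pos rfl, Nat.multichoose_eq_ite (by omega)]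
    congr 1
    · by_cases h1 : t r₀ = 1
      · simp [h1]
      · rw [if_neg (by omega), if_neg h1]
        congr 1
        omega
    · refine prod_congr rfl fun r hr' => ?_
      rw [if_neg (ne_of_mem_erase hr'), Nat.multichoose_eq_ite (hr r (ne_of_mem_erase hr'))]
  · have factor_ne (r : κ) :=
      Nat.multichoose_eq_zero_iff.not.1 (prod_ne_zero_iff.1 hi r (mem_univ r))
    refine ⟨fun h1 => ?_, fun r hr h0 => ?_⟩
    · have := factor_ne r₀
      rw [if_pos rfl, h1] at this
      omega
    · have := factor_ne r
      rw [if_neg hr, h0] at this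
      omega

/-- **Closed formula for the cardinality of `M_ℓ(1;ν)` (Lemma 7.1).**
Let `a ≥ 1`, `k ≥ 1`, `ℓ ≥ 0`, and `t : Fin k → ℕ` with `t 0 ≥ 1`, `t (k-1) ≥ 1` and
`∑ t ≥ 2`.  Let `ν` be the tuple consisting of `t 0` copies of `a`, then `t 1` copies of
`2a`, …, then `t (k-1)` copies of `ka` (so position `j` gets weight `a·(b(j)+1)` where
`b(j)` is the number of full blocks before position `j`), and let `M` be the number of
tuples `m` of nonnegative integers with `∑ ν_j·m_j = ℓ`.  If `a ∤ ℓ` then `M = 0`; if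
`ℓ = a·L` then `M` equals the sum, over all `i : Fin k → ℕ` with `∑ (r+1)·i_r ≤ L`,
`i_0 = 0` when `t 0 = 1`, and `i_r = 0` whenever `r ≠ 0` and `t r = 0`, of
`f₁(i_0)·∏_{r≠0} g_r(i_r)`, where `f₁(x) = C(x + t 0 - 2, t 0 - 2)` if `t 0 ≥ 2` and `1`
if `t 0 = 1`, and `g_r(x) = C(x + t r - 1, t r - 1)` if `t r ≥ 1` and `1` if `t r = 0`. -/
theorem stmt_12 (a k ℓ : ℕ) (ha : 1 ≤ a) (hk : 1 ≤ k)
    (t : Fin k → ℕ) (ht1 : 1 ≤ t ⟨0, hk⟩) :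
    let N : ℕ := ∑ r, t r
    let ν : Fin N → ℕ := fun j =>
      a * ((Finset.univ.filter (fun r : Fin k =>
        (∑ s : Fin k, if s ≤ r then t s else 0) ≤ (j : ℕ))).card + 1)
    let M : ℕ := ((Fintype.piFinset fun _ : Fin N => Finset.range (ℓ + 1)).filter
      (fun m => ∑ j, ν j * m j = ℓ)).card
    (¬ a ∣ ℓ → M = 0) ∧
    (∀ L : ℕ, ℓ = a * L →
      M = ∑ i ∈ (Fintype.piFinset fun _ : Fin k => Finset.range (L + 1)).filter
            (fun i => (∑ r : Fin k, ((r : ℕ) + 1) * i r) ≤ L ∧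
              (t ⟨0, hk⟩ = 1 → i ⟨0, hk⟩ = 0) ∧
              (∀ r : Fin k, r ≠ ⟨0, hk⟩ → t r = 0 → i r = 0)),
          (if t ⟨0, hk⟩ = 1 then 1 else
            Nat.choose (i ⟨0, hk⟩ + t ⟨0, hk⟩ - 2) (t ⟨0, hk⟩ - 2)) *
          ∏ r ∈ Finset.univ.erase ⟨0, hk⟩,
            (if t r = 0 then 1 else Nat.choose (i r + t r - 1) (t r - 1))) := by
  intro N ν M
  set r₀ : Fin k := ⟨0, hk⟩
  let blk (j : Fin N) : Fin k := (finSigmaFinEquiv.symm j).1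
  have hsum (m : Fin N → ℕ) : ∑ j, ν j * m j = a * ∑ j, ((blk j : ℕ) + 1) * m j := by
    simp only [ν, mul_sum, mul_assoc, blk]
    simp only [← card_prefixSum_le_finSigmaFinEquiv t (finSigmaFinEquiv.symm _),
      Equiv.apply_symm_apply]
  refine ⟨fun hdvd => ?_, fun L hL => ?_⟩
  · exact card_eq_zero.2 (filter_eq_empty_iff.2 fun m _ h => hdvd ⟨_, (hsum m ▸ h).symm⟩)
  set j₀ : Fin N := finSigmaFinEquiv ⟨r₀, ⟨0, ht1⟩⟩
  have hblk : blk j₀ = r₀ := by simp [blk, j₀]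
  have hcard (r : Fin k) : #(blockErase blk j₀ r) = if r = r₀ then t r - 1 else t r := by
    rw [blockErase, card_erase_eq_ite, card_filter_finSigmaFinEquiv_symm_fst]
    simp [hblk, eq_comm]
  have count := card_weightedCompositions blk (fun r => (r : ℕ) + 1) j₀
    (fun _ => Nat.succ_pos _) (by simp [hblk, r₀]) (hL ▸ Nat.le_mul_of_pos_left L ha)
  simp only [hcard] at count
  rw [← filter_filter]
  convert count.trans (sum_prod_multichoose_eq_sum_choose _ t ht1) using 2
  -- the second goal only compares two `Decidable` instances of the same filter predicate
  · exact filter_congr fun m _ => by rw [hsum, hL, Nat.mul_left_cancel_iff ha]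
  · ext
    simp only [mem_filter]
end

section
/- Let n ≥ 3, ε ∈ {0,1} and ℓ ≥ 1+ε be integers. Then the number of (n+1)-tuples m = (m_0, …, m_n) of nonnegative integers with m_0 + m_1 + 2(m_2 + ⋯ + m_{n−1}) + m_n = ℓ and m_n ≡ ε (mod 2) equals C(n + ⌊(ℓ−ε)/2⌋, n) + C(n + ⌊(ℓ−1−ε)/2⌋, n), where C(·,·) is the binomial coefficient. (For ε = 0 this is the number of dominant maximal weights of V(ℓΛ_0) over B_n^{(1)}, and for ε = 1 that of V((ℓ−1)Λ_0 + Λ_n).) -/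
/-!
Split the tuples according to the parity `r` of `m₀`. Writing each weight-one coordinate
`mᵢ` (`i = 0, 1, n`) as `2aᵢ + (mᵢ mod 2)` and setting `aᵢ = mᵢ` for the weight-two ones turns
the equation into `2 ∑ aᵢ + (m₀ mod 2) + (m₁ mod 2) + (mₙ mod 2) = ℓ`. Once the parities `r` of
`m₀` and `ε` of `mₙ` are fixed, that of `m₁` is forced, so the tuples correspond bijectively to
the `a ∈ ℕⁿ⁺¹` with `∑ aᵢ = ⌊(ℓ - r - ε)/2⌋`; by stars and bars there are
`C(n + ⌊(ℓ - r - ε)/2⌋, n)` of them.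
-/

open Finset

section Halving

variable {ι : Type*} (P : ι → Prop) [DecidablePred P]

def halveOn (m : ι → ℕ) (i : ι) : ℕ := if P i then m i / 2 else m i

def unhalveOn (c a : ι → ℕ) (i : ι) : ℕ := if P i then 2 * a i + c i else a i

variable {P}

lemma unhalveOn_halveOn {c m : ι → ℕ} (h : ∀ i, P i → m i % 2 = c i) :
    unhalveOn P c (halveOn P m) = m := by
  funext i
  by_cases hi : P i <;> simp only [unhalveOn, halveOn, hi, if_true, if_false]
  rw [← h i hi, Nat.div_add_mod]

lemma halveOn_unhalveOn {c : ι → ℕ} (hc : ∀ i, P i → c i < 2) (a : ι → ℕ) :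
    halveOn P (unhalveOn P c a) = a := by
  funext i
  by_cases hi : P i <;> simp only [unhalveOn, halveOn, hi, if_true, if_false]
  have := hc i hi
  omega

variable [Fintype ι]

lemma sum_weight_mul_unhalveOn (c a : ι → ℕ) :
    ∑ i, (if P i then 1 else 2) * unhalveOn P c a i = 2 * ∑ i, a i + ∑ i with P i, c i := by
  rw [sum_filter, mul_sum, ← sum_add_distrib]
  refine sum_congr rfl fun i _ => ?_
  by_cases hi : P i <;> simp only [unhalveOn, hi, if_true, if_false] <;> ring

lemma sum_weight_mul_eq_sum_halveOn (m : ι → ℕ) :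
    ∑ i, (if P i then 1 else 2) * m i = 2 * ∑ i, halveOn P m i + ∑ i with P i, m i % 2 := by
  conv_lhs => rw [← unhalveOn_halveOn (P := P) (c := fun i => m i % 2) (fun _ _ => rfl)]
  exact sum_weight_mul_unhalveOn _ _

variable [DecidableEq ι]

lemma mem_piFinset_range_of_sum_weight_mul_eq {ℓ : ℕ} {m : ι → ℕ}
    (h : ∑ i, (if P i then 1 else 2) * m i = ℓ) :
    m ∈ Fintype.piFinset fun _ => range (ℓ + 1) := by
  refine Fintype.mem_piFinset.2 fun i => mem_range.2 (Nat.lt_succ_of_le ?_)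
  calc m i ≤ (if P i then 1 else 2) * m i := Nat.le_mul_of_pos_left _ (by split_ifs <;> norm_num)
    _ ≤ ℓ := h ▸ single_le_sum (f := fun j => (if P j then 1 else 2) * m j)
        (fun j _ => Nat.zero_le _) (mem_univ i)

lemma card_filter_sum_weight_mul_eq_and_mod_two {ℓ k : ℕ} {c : ι → ℕ} (hc : ∀ i, P i → c i < 2)
    (hk : 2 * k + ∑ i with P i, c i = ℓ) :
    #{m ∈ Fintype.piFinset (fun _ => range (ℓ + 1)) |
        ∑ i, (if P i then 1 else 2) * m i = ℓ ∧ ∀ i, P i → m i % 2 = c i} =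
      #(piAntidiag (univ : Finset ι) k) := by
  refine card_nbij' (halveOn P) (unhalveOn P c) ?_ ?_ ?_ ?_
  · intro m hm
    obtain ⟨-, hsum, hmod⟩ := mem_filter.1 hm
    have hres : ∑ i with P i, m i % 2 = ∑ i with P i, c i :=
      sum_congr rfl fun i hi => hmod i (mem_filter.1 hi).2
    rw [sum_weight_mul_eq_sum_halveOn] at hsum
    exact mem_piAntidiag.2 ⟨by change ∑ i, halveOn P m i = k; omega, fun i _ => mem_univ i⟩
  · intro a ha
    replace ha := (mem_piAntidiag.1 ha).1
    have hsum : ∑ i, (if P i then 1 else 2) * unhalveOn P c a i = ℓ := by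
      rw [sum_weight_mul_unhalveOn, ha, hk]
    refine mem_filter.2 ⟨mem_piFinset_range_of_sum_weight_mul_eq hsum, hsum, fun i hi => ?_⟩
    simp only [unhalveOn, hi, if_true]
    have := hc i hi
    omega
  · intro m hm
    exact unhalveOn_halveOn (mem_filter.1 hm).2.2
  · intro a _
    exact halveOn_unhalveOn hc a

lemma card_filter_sum_weight_mul_eq_and_mod_two_of_free {ℓ : ℕ} {j : ι} {T : Finset ι}
    {p : ι → ℕ} (hP : ∀ i, P i ↔ i = j ∨ i ∈ T) (hj : j ∉ T) (hp : ∀ i ∈ T, p i < 2)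
    (hℓ : ∑ i ∈ T, p i ≤ ℓ) :
    #{m ∈ Fintype.piFinset (fun _ => range (ℓ + 1)) |
        ∑ i, (if P i then 1 else 2) * m i = ℓ ∧ ∀ i ∈ T, m i % 2 = p i} =
      #(piAntidiag (univ : Finset ι) ((ℓ - ∑ i ∈ T, p i) / 2)) := by
  set q := ∑ i ∈ T, p i
  have hPT : ({i | P i} : Finset ι) = insert j T := by ext i; simp [hP]
  -- the parity of the free coordinate `m j` is forced by the weighted sum
  obtain ⟨c, hcj, hcT⟩ : ∃ c : ι → ℕ, c j = (ℓ - q) % 2 ∧ ∀ i ∈ T, c i = p i :=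
    ⟨Function.update p j ((ℓ - q) % 2), Function.update_self .., fun i hi =>
      Function.update_of_ne (ne_of_mem_of_not_mem hi hj) ..⟩
  have hc : ∑ i with P i, c i = (ℓ - q) % 2 + q := by
    rw [hPT, sum_insert hj, hcj, sum_congr rfl hcT]
  rw [← card_filter_sum_weight_mul_eq_and_mod_two (P := P) (ℓ := ℓ) (k := (ℓ - q) / 2) (c := c)
    ?_ (by omega)]
  · refine congrArg card (filter_congr fun m _ => and_congr_right fun hsum => ?_)
    constructor
    · intro hmod i hi
      rcases (hP i).1 hi with rfl | hiT
      · have hres : ∑ i with P i, m i % 2 = m i % 2 + q := by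
          rw [hPT, sum_insert hj, sum_congr rfl hmod]
        rw [sum_weight_mul_eq_sum_halveOn, hres] at hsum
        omega
      · rw [hmod i hiT, hcT i hiT]
    · intro hmod i hi
      rw [hmod i ((hP i).2 (Or.inr hi)), hcT i hi]
  · intro i hi
    rcases (hP i).1 hi with rfl | hiT
    · omega
    · exact hcT i hiT ▸ hp i hiT

end Halving

lemma card_piAntidiag_univ {ι : Type*} [Fintype ι] [DecidableEq ι] (k : ℕ) :
    #(piAntidiag (univ : Finset ι) k) = (Fintype.card ι + k - 1).choose k := by
  rw [← map_sym_eq_piAntidiag, card_map, sym_univ, card_univ, Sym.card_sym_eq_choose]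

lemma card_filter_sum_typeB_weight_mul_eq_and_mod_two (n ℓ ε r : ℕ) (hn : 2 ≤ n) (hε : ε < 2)
    (hr : r < 2) (hℓ : r + ε ≤ ℓ) :
    #{m ∈ Fintype.piFinset (fun _ : Fin (n + 1) => range (ℓ + 1)) |
        (∑ i : Fin (n + 1), (if (i : ℕ) = 0 ∨ (i : ℕ) = 1 ∨ (i : ℕ) = n then 1 else 2) * m i = ℓ
          ∧ m (Fin.last n) % 2 = ε) ∧ m 0 % 2 = r} =
      (n + (ℓ - (r + ε)) / 2).choose n := by
  have h1 : ((1 : Fin (n + 1)) : ℕ) = 1 := by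
    rw [Fin.val_one']; exact Nat.mod_eq_of_lt (by omega)
  have h0last : (0 : Fin (n + 1)) ≠ Fin.last n := by simp [Fin.ext_iff]; omega
  have hP : ∀ i : Fin (n + 1), ((i : ℕ) = 0 ∨ (i : ℕ) = 1 ∨ (i : ℕ) = n) ↔
      i = 1 ∨ i ∈ ({0, Fin.last n} : Finset (Fin (n + 1))) := by
    intro i
    simp only [mem_insert, mem_singleton, Fin.ext_iff, h1, Fin.val_zero, Fin.val_last]
    tauto
  have h1T : (1 : Fin (n + 1)) ∉ ({0, Fin.last n} : Finset (Fin (n + 1))) := by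
    simp only [mem_insert, mem_singleton, Fin.ext_iff, h1, Fin.val_zero, Fin.val_last]
    omega
  have key := card_filter_sum_weight_mul_eq_and_mod_two_of_free (ℓ := ℓ)
    (p := fun i => if i = 0 then r else ε) hP h1T (fun i _ => by split_ifs <;> assumption)
    (by simp [sum_pair h0last, h0last.symm]; omega)
  rw [card_piAntidiag_univ, Fintype.card_fin, sum_pair h0last, if_pos rfl, if_neg h0last.symm,
    show n + 1 + (ℓ - (r + ε)) / 2 - 1 = n + (ℓ - (r + ε)) / 2 by omega,
    ← Nat.choose_symm_add] at key
  rw [← key]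
  congr 1
  ext m
  simp only [mem_filter, forall_mem_insert, forall_eq, mem_singleton, if_true, if_neg h0last.symm]
  tauto

/-- **Number of dominant maximal weights in type `B_n^(1)`.**
For `n ≥ 3`, `ε ∈ {0,1}` and `ℓ ≥ 1 + ε`, the number of `(n+1)`-tuples `m` of nonnegative
integers with `m_0 + m_1 + 2(m_2 + ⋯ + m_{n-1}) + m_n = ℓ` and `m_n ≡ ε (mod 2)` equals
`C(n + ⌊(ℓ-ε)/2⌋, n) + C(n + ⌊(ℓ-1-ε)/2⌋, n)`. -/
theorem stmt_13 (n ℓ ε : ℕ) (hn : 3 ≤ n) (hε : ε ≤ 1) (hℓ : 1 + ε ≤ ℓ) :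
    (((Fintype.piFinset fun _ : Fin (n + 1) => Finset.range (ℓ + 1)).filter
        (fun m =>
          (∑ i : Fin (n + 1),
            (if (i : ℕ) = 0 ∨ (i : ℕ) = 1 ∨ (i : ℕ) = n then 1 else 2) * m i = ℓ)
          ∧ m (Fin.last n) % 2 = ε)).card)
      = Nat.choose (n + (ℓ - ε) / 2) n + Nat.choose (n + (ℓ - 1 - ε) / 2) n := by
  rw [card_eq_sum_card_fiberwise (f := fun m => m 0 % 2) (t := range 2)
      fun m _ => mem_range.2 (Nat.mod_lt _ two_pos),
    sum_range_succ, sum_range_one, filter_filter, filter_filter,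
    card_filter_sum_typeB_weight_mul_eq_and_mod_two n ℓ ε 0 (by omega) (by omega) (by omega)
      (by omega),
    card_filter_sum_typeB_weight_mul_eq_and_mod_two n ℓ ε 1 (by omega) (by omega) (by omega)
      (by omega),
    zero_add, Nat.sub_add_eq, Nat.sub_right_comm]
end

section
/- Let n ≥ 2, ℓ ≥ 0 and i ∈ {0,1} be integers. Then 2 times the number of (n+1)-tuples m = (m_0, …, m_n) of nonnegative integers with m_0 + ⋯ + m_n = ℓ and ∑_{r odd} m_r ≡ i (mod 2) equals C(n+ℓ, n) + (−1)^i · ε · C(⌊(n+ℓ)/2⌋, ⌊n/2⌋), where ε = 1 if n·ℓ is even and ε = 0 if n·ℓ is odd, and C(·,·) is the binomial coefficient. (This counts the dominant maximal weights of V((ℓ−1)Λ_0 + Λ_i) over C_n^{(1)}.) -/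
/-!
Twice the number of tuples whose odd-indexed entries sum to `i` mod 2 is the total number of
tuples plus `(-1)^i` times the signed count `D k ℓ = ∑ (-1)^(oddSum m)` over tuples of length `k`
summing to `ℓ`. The total is a stars-and-bars binomial. Prepending a coordinate swaps the parity of
every other index, so `D (k+1) ℓ = ∑_{a+b=ℓ} (-1)^b D k b`, which amounts to the Pascal-type
recurrence `D (k+1) (ℓ+1) = D (k+1) ℓ + (-1)^(ℓ+1) D k (ℓ+1)`. The closed form
`ε·C(⌊(n+ℓ)/2⌋, ⌊n/2⌋)` for `D (n+1) ℓ` satisfies the same recurrence, as one checks separately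
for each parity of `n` and `ℓ`.
-/

open Finset

namespace Finset.Nat

theorem card_antidiagonalTuple (k ℓ : ℕ) :
    #(antidiagonalTuple k ℓ) = (k + ℓ - 1).choose ℓ := by
  rw [← piAntidiag_univ_fin_eq_antidiagonalTuple, ← map_sym_eq_piAntidiag, card_map,
    show (univ : Finset (Fin k)).sym ℓ = univ from eq_univ_of_forall fun _ =>
      mem_sym_iff.2 fun _ _ => mem_univ _,
    card_univ, Sym.card_sym_eq_choose, Fintype.card_fin]

theorem sum_antidiagonalTuple_succ {M : Type*} [AddCommMonoid M] (k ℓ : ℕ)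
    (f : (Fin (k + 1) → ℕ) → M) :
    ∑ m ∈ antidiagonalTuple (k + 1) ℓ, f m =
      ∑ p ∈ antidiagonal ℓ, ∑ x ∈ antidiagonalTuple k p.2, f (Fin.cons p.1 x) := by
  rw [sum_sigma']
  symm
  refine sum_nbij' (fun q => Fin.cons q.1.1 q.2) (fun m => ⟨(m 0, ∑ i, Fin.tail m i), Fin.tail m⟩)
    ?_ ?_ ?_ ?_ (fun _ _ => rfl)
  · rintro ⟨⟨a, b⟩, x⟩ h
    simp_all [mem_antidiagonalTuple, Fin.sum_cons]
  · intro m h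
    simp_all [mem_antidiagonalTuple, Fin.sum_univ_succ, Fin.tail]
  · rintro ⟨⟨a, b⟩, x⟩ h
    simp_all [mem_antidiagonalTuple]
  · intro m _
    exact Fin.cons_self_tail m

theorem filter_piFinset_sum_eq_antidiagonalTuple (k ℓ : ℕ) :
    (Fintype.piFinset fun _ : Fin k => range (ℓ + 1)).filter (fun m => ∑ r, m r = ℓ) =
      antidiagonalTuple k ℓ := by
  ext m
  simp only [mem_filter, Fintype.mem_piFinset, mem_range, mem_antidiagonalTuple,
    and_iff_right_iff_imp]
  rintro rfl r
  exact Nat.lt_succ_of_le (single_le_sum (fun _ _ => Nat.zero_le _) (mem_univ r))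

end Finset.Nat

theorem two_mul_card_filter_mod_two {α : Type*} (s : Finset α) (f : α → ℕ) {i : ℕ} (hi : i ≤ 1) :
    (2 * #(s.filter fun x => f x % 2 = i) : ℤ) = #s + (-1) ^ i * ∑ x ∈ s, (-1) ^ f x := by
  rw [card_filter, card_eq_sum_ones, mul_sum, Nat.cast_sum, Nat.cast_sum, mul_sum,
    ← sum_add_distrib]
  refine sum_congr rfl fun x _ => ?_
  rw [neg_one_pow_eq_pow_mod_two (R := ℤ) (n := f x)]
  interval_cases i <;> rcases Nat.mod_two_eq_zero_or_one (f x) with h | h <;> simp [h]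

def oddSum {k : ℕ} (m : Fin k → ℕ) : ℕ :=
  ∑ r ∈ univ.filter (fun r : Fin k => (r : ℕ) % 2 = 1), m r

theorem oddSum_cons_add_oddSum {k : ℕ} (a : ℕ) (x : Fin k → ℕ) :
    oddSum (Fin.cons a x : Fin (k + 1) → ℕ) + oddSum x = ∑ r, x r := by
  simp only [oddSum, sum_filter, Fin.sum_univ_succ, Fin.val_zero, Fin.val_succ, Fin.cons_zero,
    Fin.cons_succ, Nat.zero_mod, zero_ne_one, if_false, zero_add, ← sum_add_distrib]
  refine sum_congr rfl fun r _ => ?_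
  split_ifs <;> omega

def signedCount (k ℓ : ℕ) : ℤ :=
  ∑ m ∈ Nat.antidiagonalTuple k ℓ, (-1) ^ oddSum m

theorem signedCount_zero_right (k : ℕ) : signedCount k 0 = 1 := by
  simp [signedCount, Nat.antidiagonalTuple_zero_right, oddSum]

theorem signedCount_one_left (ℓ : ℕ) : signedCount 1 ℓ = 1 := by
  simp [signedCount, oddSum]

theorem signedCount_succ (k ℓ : ℕ) :
    signedCount (k + 1) ℓ = ∑ p ∈ antidiagonal ℓ, (-1) ^ p.2 * signedCount k p.2 := by
  rw [signedCount, Nat.sum_antidiagonalTuple_succ]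
  refine sum_congr rfl fun p _ => ?_
  rw [signedCount, mul_sum]
  refine sum_congr rfl fun x hx => ?_
  rw [← Nat.mem_antidiagonalTuple.1 hx, ← oddSum_cons_add_oddSum p.1 x, pow_add, mul_assoc,
    ← pow_add, ← two_mul, pow_mul, neg_one_sq, one_pow, mul_one]

theorem signedCount_succ_succ (k ℓ : ℕ) :
    signedCount (k + 1) (ℓ + 1) =
      signedCount (k + 1) ℓ + (-1) ^ (ℓ + 1) * signedCount k (ℓ + 1) := by
  rw [signedCount_succ, Nat.sum_antidiagonal_succ, signedCount_succ, add_comm]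

def halfChoose (n ℓ : ℕ) : ℤ :=
  if n * ℓ % 2 = 0 then ((n + ℓ) / 2).choose (n / 2) else 0

theorem halfChoose_even_left (s ℓ : ℕ) : halfChoose (2 * s) ℓ = (s + ℓ / 2).choose s := by
  rw [halfChoose, if_pos (by rw [Nat.mul_assoc, Nat.mul_mod_right]),
    show (2 * s + ℓ) / 2 = s + ℓ / 2 by omega, Nat.mul_div_cancel_left s two_pos]

theorem halfChoose_odd_even (s t : ℕ) : halfChoose (2 * s + 1) (2 * t) = (s + t).choose s := by
  rw [halfChoose, if_pos (by rw [Nat.mul_left_comm, Nat.mul_mod_right]),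
    show (2 * s + 1 + 2 * t) / 2 = s + t by omega, show (2 * s + 1) / 2 = s by omega]

theorem halfChoose_odd_odd (s t : ℕ) : halfChoose (2 * s + 1) (2 * t + 1) = 0 :=
  if_neg (by simp [Nat.mul_mod, Nat.add_mod])

theorem halfChoose_zero_left (ℓ : ℕ) : halfChoose 0 ℓ = 1 := by
  simpa using halfChoose_even_left 0 ℓ

theorem halfChoose_zero_right (n : ℕ) : halfChoose n 0 = 1 := by
  simp [halfChoose]

theorem halfChoose_succ_succ (n ℓ : ℕ) :
    halfChoose (n + 1) (ℓ + 1) = halfChoose (n + 1) ℓ + (-1) ^ (ℓ + 1) * halfChoose n (ℓ + 1) := by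
  obtain ⟨s, rfl | rfl⟩ := Nat.even_or_odd' n <;> obtain ⟨t, rfl | rfl⟩ := Nat.even_or_odd' ℓ
  · rw [halfChoose_odd_odd, halfChoose_odd_even, halfChoose_even_left,
      show (2 * t + 1) / 2 = t by omega, pow_succ, pow_mul]
    simp
  · rw [show 2 * t + 1 + 1 = 2 * (t + 1) by omega, halfChoose_odd_even, halfChoose_odd_odd,
      halfChoose_even_left, Nat.mul_div_cancel_left _ two_pos, pow_mul]
    simp
  · rw [show 2 * s + 1 + 1 = 2 * (s + 1) by omega, halfChoose_even_left, halfChoose_even_left,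
      halfChoose_odd_odd, show (2 * t + 1) / 2 = t by omega, Nat.mul_div_cancel_left _ two_pos]
    simp
  · rw [show 2 * s + 1 + 1 = 2 * (s + 1) by omega, show 2 * t + 1 + 1 = 2 * (t + 1) by omega,
      halfChoose_even_left, halfChoose_even_left, halfChoose_odd_even,
      show (2 * t + 1) / 2 = t by omega, Nat.mul_div_cancel_left _ two_pos, pow_mul,
      show s + 1 + (t + 1) = s + t + 1 + 1 by omega, Nat.choose_succ_succ', neg_one_sq, one_pow,
      one_mul, show s + 1 + t = s + t + 1 by omega, show s + (t + 1) = s + t + 1 by omega]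
    push_cast
    ring

theorem signedCount_succ_eq_halfChoose (n ℓ : ℕ) : signedCount (n + 1) ℓ = halfChoose n ℓ := by
  induction n generalizing ℓ with
  | zero => rw [signedCount_one_left, halfChoose_zero_left]
  | succ n ihn =>
    induction ℓ with
    | zero => rw [signedCount_zero_right, halfChoose_zero_right]
    | succ ℓ ihℓ => rw [signedCount_succ_succ, halfChoose_succ_succ, ihℓ, ihn]

theorem stmt_14_general (n ℓ i : ℕ) (hi : i ≤ 1) :
    (2 * ((Fintype.piFinset fun _ : Fin (n + 1) => Finset.range (ℓ + 1)).filter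
        (fun m => ∑ r, m r = ℓ ∧
          (∑ r ∈ Finset.univ.filter (fun r : Fin (n + 1) => (r : ℕ) % 2 = 1), m r) % 2
            = i)).card : ℤ)
      = (Nat.choose (n + ℓ) n : ℤ)
        + (-1 : ℤ) ^ i * (if n * ℓ % 2 = 0 then 1 else 0) *
            (Nat.choose ((n + ℓ) / 2) (n / 2) : ℤ) := by
  rw [← filter_filter, Nat.filter_piFinset_sum_eq_antidiagonalTuple]
  refine (two_mul_card_filter_mod_two _ oddSum hi).trans ?_
  change _ + _ * signedCount (n + 1) ℓ = _
  rw [Nat.card_antidiagonalTuple, show n + 1 + ℓ - 1 = n + ℓ by omega, ← Nat.choose_symm_add,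
    signedCount_succ_eq_halfChoose, halfChoose]
  split_ifs <;> simp

/-- **Number of dominant maximal weights in type `C_n^(1)`.**
For `n ≥ 2`, `ℓ ≥ 0` and `i ∈ {0,1}`, twice the number of `(n+1)`-tuples `m` of
nonnegative integers with `m_0 + ⋯ + m_n = ℓ` and `∑_{r odd} m_r ≡ i (mod 2)` equals
`C(n+ℓ, n) + (-1)^i·ε·C(⌊(n+ℓ)/2⌋, ⌊n/2⌋)` where `ε = 1` if `n·ℓ` is even and `0`
otherwise. -/
theorem stmt_14 (n ℓ i : ℕ) (hn : 2 ≤ n) (hi : i ≤ 1) :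
    (2 * ((Fintype.piFinset fun _ : Fin (n + 1) => Finset.range (ℓ + 1)).filter
        (fun m => ∑ r, m r = ℓ ∧
          (∑ r ∈ Finset.univ.filter (fun r : Fin (n + 1) => (r : ℕ) % 2 = 1), m r) % 2
            = i)).card : ℤ)
      = (Nat.choose (n + ℓ) n : ℤ)
        + (-1 : ℤ) ^ i * (if n * ℓ % 2 = 0 then 1 else 0) *
            (Nat.choose ((n + ℓ) / 2) (n / 2) : ℤ) :=
  stmt_14_general n ℓ i hi
end
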